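/- arXiv:2312.11017 — 10 statements merged into one kernel-verified Lean document; each statement's English description precedes it below -/
import Mathlib

section
/- Let (X_i)_{i=1}^n be finite-valued random variables and (f_i, g_i)_{i=1}^{n-1} functions with f_i(X_i) = g_i(X_{i+1}) =: U_i almost surely, such that X_1 → U_1 → X_2 → U_2 → ... → U_{n-1} → X_n forms a Markov chain. Then H(X_1,...,X_n) + Σ_{i=1}^{n-1} H(U_i) = Σ_{i=1}^n H(X_i). -/
open MeasureTheory ProbabilityTheory Real

/-- Shannon entropy (natural log) of a finitely-valued random variable. -/
noncomputable def ent {Ω S : Type*} [MeasurableSpace Ω] [Fintype S]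
    (μ : Measure Ω) (X : Ω → S) : ℝ :=
  ∑ s : S, Real.negMulLog ((μ (X ⁻¹' {s})).toReal)

/-!
Fix an atom `x` of positive mass `t`, and let `A k`, `B k` be the masses of the cylinders fixing
`X 0, …, X k`, resp. `X k, …, X m`, at `x`. Since `U j` is a function of each of its neighbours
`X j` and `X (j+1)`, the constraints on the `U`'s in the Markov hypotheses are almost surely
redundant, and the Markov property at `X i` and at `U i` reads
`t · P(X i = x i) = A i · B i` and `t · P(U i = u i) = A i · B (i+1)`.
Eliminating `B (i+1)` gives `A i · P(X (i+1) = x (i+1)) = A (i+1) · P(U i = u i)`, which telescopes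
to `P(X = x) · ∏ P(U i = u i) = ∏ P(X i = x i)`. Taking `-E log` of this identity yields the
entropy identity.
-/

open Finset
open scoped ENNReal

section Entropy

variable {Ω α : Type*} [MeasurableSpace Ω] {μ : Measure Ω} [IsFiniteMeasure μ]
  [Fintype α] [MeasurableSpace α] [MeasurableSingletonClass α] {Z : Ω → α}

lemma ent_comp_eq_neg_sum {β : Type*} [Fintype β] (hZ : Measurable Z) (F : α → β) :
    ent μ (fun ω => F (Z ω))
      = -∑ a, (μ (Z ⁻¹' {a})).toReal * log (μ ((fun ω => F (Z ω)) ⁻¹' {F a})).toReal := by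
  classical
  have hq : ∀ b, (μ ((fun ω => F (Z ω)) ⁻¹' {b})).toReal
      = ∑ a with F a = b, (μ (Z ⁻¹' {a})).toReal := by
    intro b
    rw [← ENNReal.toReal_sum fun _ _ => measure_ne_top _ _,
      sum_measure_preimage_singleton _ fun a _ => hZ (measurableSet_singleton a)]
    congr 2
    ext ω
    simp
  rw [← sum_neg_distrib, ← sum_fiberwise univ F]
  refine sum_congr rfl fun b _ => ?_
  rw [sum_congr rfl fun a ha => by rw [(mem_filter.1 ha).2], sum_neg_distrib, ← sum_mul,
    ← hq b, negMulLog, neg_mul]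

lemma ent_add_sum_ent_eq_sum_ent_of_mul_prod_eq_prod {ι κ : Type*} [Fintype ι] [Fintype κ]
    {β : ι → Type*} {γ : κ → Type*} [∀ i, Fintype (β i)] [∀ k, Fintype (γ k)]
    (hZ : Measurable Z) (F : ∀ i, α → β i) (G : ∀ k, α → γ k)
    (h : ∀ a, μ (Z ⁻¹' {a}) ≠ 0 →
      μ (Z ⁻¹' {a}) * ∏ i, μ ((fun ω => F i (Z ω)) ⁻¹' {F i a})
        = ∏ k, μ ((fun ω => G k (Z ω)) ⁻¹' {G k a})) :
    ent μ Z + ∑ i, ent μ (fun ω => F i (Z ω)) = ∑ k, ent μ (fun ω => G k (Z ω)) := by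
  simp only [ent_comp_eq_neg_sum hZ, sum_neg_distrib]
  rw [ent, sum_comm (γ := ι), sum_comm (γ := κ), ← sub_eq_add_neg, ← sum_sub_distrib,
    ← sum_neg_distrib]
  refine sum_congr rfl fun a _ => ?_
  set p := μ (Z ⁻¹' {a})
  rcases eq_or_ne p 0 with hp | hp
  · simp [hp]
  have pos : ∀ {s : Set Ω}, Z ⁻¹' {a} ⊆ s → 0 < (μ s).toReal := fun hs =>
    ENNReal.toReal_pos (fun h0 => hp (measure_mono_null hs h0)) (measure_ne_top _ _)
  have hF : ∀ i, 0 < (μ ((fun ω => F i (Z ω)) ⁻¹' {F i a})).toReal := fun i =>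
    pos fun ω (hω : Z ω = a) => by simp [hω]
  have hG : ∀ k, 0 < (μ ((fun ω => G k (Z ω)) ⁻¹' {G k a})).toReal := fun k =>
    pos fun ω (hω : Z ω = a) => by simp [hω]
  have hlog := congrArg (fun r => log (ENNReal.toReal r)) (h a hp)
  simp only [ENNReal.toReal_mul, ENNReal.toReal_prod] at hlog
  rw [log_mul (pos subset_rfl).ne' (prod_pos fun i _ => hF i).ne',
    log_prod fun i _ => (hF i).ne', log_prod fun k _ => (hG k).ne'] at hlog
  rw [negMulLog, ← mul_sum, ← mul_sum, ← hlog]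
  ring

end Entropy

theorem Fin.mul_prod_eq_mul_prod_succ_of_telescope {M : Type*} [CommMonoid M] :
    ∀ {m : ℕ} {A a : Fin (m + 1) → M} {b : Fin m → M},
      (∀ i : Fin m, A i.castSucc * a i.succ = A i.succ * b i) →
      A (Fin.last m) * ∏ i, b i = A 0 * ∏ i : Fin m, a i.succ
  | 0, A, a, b, _ => by simp
  | m + 1, A, a, b, h => by
    have ih := Fin.mul_prod_eq_mul_prod_succ_of_telescope (A := fun i => A i.castSucc)
      (a := fun i => a i.castSucc) (b := fun i => b i.castSucc)
      fun i => by simpa only [Fin.succ_castSucc] using h i.castSucc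
    simp only [Fin.castSucc_zero, ← Fin.succ_castSucc] at ih
    rw [Fin.prod_univ_castSucc, Fin.prod_univ_castSucc, ← Fin.succ_last]
    calc A (Fin.last m).succ * ((∏ i : Fin m, b i.castSucc) * b (Fin.last m))
        = (A (Fin.last m).succ * b (Fin.last m)) * ∏ i : Fin m, b i.castSucc := by ac_rfl
      _ = (A (Fin.last m).castSucc * ∏ i : Fin m, b i.castSucc) * a (Fin.last m).succ := by
        rw [← h]; ac_rfl
      _ = _ := by rw [ih, mul_assoc]

theorem ENNReal.mul_prod_eq_prod_of_markov {m : ℕ} {t : ℝ≥0∞} (ht0 : t ≠ 0) (ht : t ≠ ⊤)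
    {a A B : Fin (m + 1) → ℝ≥0∞} {b : Fin m → ℝ≥0∞}
    (hX : ∀ i, t * a i = A i * B i) (hU : ∀ i, t * b i = A i.castSucc * B i.succ)
    (hA0 : A 0 = a 0) (hAlast : A (Fin.last m) = t) :
    t * ∏ i, b i = ∏ j, a j := by
  have step : ∀ i : Fin m, A i.castSucc * a i.succ = A i.succ * b i := fun i => by
    refine (ENNReal.mul_right_inj ht0 ht).1 ?_
    calc t * (A i.castSucc * a i.succ) = A i.castSucc * (t * a i.succ) := mul_left_comm ..
      _ = A i.succ * (t * b i) := by rw [hX, hU]; ring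
      _ = t * (A i.succ * b i) := mul_left_comm ..
  rw [← hAlast, Fin.mul_prod_eq_mul_prod_succ_of_telescope step, hA0, Fin.prod_univ_succ]

lemma Set.iInter_preimage_singleton_inter_iInter_preimage_singleton {Ω ι : Type*}
    {S : ι → Type*} (X : ∀ i, Ω → S i) (x : ∀ i, S i) {p q : ι → Prop}
    (hpq : ∀ j, p j ∨ q j) :
    (⋂ j, ⋂ (_ : p j), X j ⁻¹' {x j}) ∩ (⋂ j, ⋂ (_ : q j), X j ⁻¹' {x j})
      = (fun ω i => X i ω) ⁻¹' {x} := by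
  ext ω
  simp only [Set.mem_inter_iff, Set.mem_iInter, Set.mem_preimage, Set.mem_singleton_iff,
    funext_iff]
  exact ⟨fun h j => (hpq j).elim (h.1 j) (h.2 j), fun h => ⟨fun j _ => h j, fun j _ => h j⟩⟩

section MarkovChain

variable {Ω : Type*} [MeasurableSpace Ω] {μ : Measure Ω} {m : ℕ}
  {SX : Fin (m + 1) → Type*} {SU : Fin m → Type*} {X : ∀ i, Ω → SX i}
  {f : ∀ i : Fin m, SX i.castSucc → SU i} {g : ∀ i : Fin m, SX i.succ → SU i}
  {x : ∀ i, SX i}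

/-- Each constraint `U j = f j (x j.castSucc)` is implied, almost surely, by the constraint on
whichever neighbour `X j.castSucc` or `X j.succ` the cylinder fixes. -/
lemma iInter_preimage_inter_iInter_link_ae_eq
    (hfg : ∀ᵐ ω ∂μ, ∀ j, f j (X j.castSucc ω) = g j (X j.succ ω))
    (hx : ∀ j, f j (x j.castSucc) = g j (x j.succ)) {p : Fin m → Prop} {q : Fin (m + 1) → Prop}
    (hpq : ∀ j, p j → q j.castSucc ∨ q j.succ) :
    ((⋂ j, ⋂ (_ : q j), X j ⁻¹' {x j}) ∩
        ⋂ j, ⋂ (_ : p j), (fun ω => f j (X j.castSucc ω)) ⁻¹' {f j (x j.castSucc)} : Set Ω)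
      =ᵐ[μ] ⋂ j, ⋂ (_ : q j), X j ⁻¹' {x j} := by
  refine Filter.eventuallyEq_set.2 (hfg.mono fun ω hω => ?_)
  simp only [Set.mem_inter_iff, Set.mem_iInter, Set.mem_preimage, Set.mem_singleton_iff,
    and_iff_left_iff_imp]
  intro hq j hj
  rcases hpq j hj with h | h
  · rw [hq _ h]
  · rw [hω, hq _ h, hx]

lemma measure_inter_mul_eq_of_ae_eq {P F P' F' : Set Ω} {c : ℝ≥0∞} (hP : P =ᵐ[μ] P')
    (hF : F =ᵐ[μ] F') (h : μ (P ∩ F) * c = μ P * μ F) : μ (P' ∩ F') * c = μ P' * μ F' := by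
  rwa [measure_congr (hP.inter hF), measure_congr hP, measure_congr hF] at h

end MarkovChain

theorem stmt1_general {Ω : Type*} [MeasurableSpace Ω] (μ : Measure Ω) [IsProbabilityMeasure μ]
    (m : ℕ) (SX : Fin (m + 1) → Type*) (SU : Fin m → Type*)
    [∀ i, Fintype (SX i)] [∀ i, Fintype (SU i)]
    [∀ i, MeasurableSpace (SX i)]
    [∀ i, MeasurableSingletonClass (SX i)]
    (X : ∀ i, Ω → SX i)
    (f : ∀ i : Fin m, SX i.castSucc → SU i) (g : ∀ i : Fin m, SX i.succ → SU i)
    (hX : ∀ i, Measurable (X i))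
    (hfg : ∀ i : Fin m, ∀ᵐ ω ∂μ, f i (X i.castSucc ω) = g i (X i.succ ω))
    (hMCX : ∀ (i : Fin (m + 1)) (x : ∀ j, SX j) (u : ∀ j, SU j),
      μ ((((⋂ j, ⋂ (_ : j ≤ i), X j ⁻¹' {x j}) ∩
            ⋂ j, ⋂ (_ : j.castSucc < i), (fun ω => f j (X j.castSucc ω)) ⁻¹' {u j}) ∩
          ((⋂ j, ⋂ (_ : i ≤ j), X j ⁻¹' {x j}) ∩
            ⋂ j, ⋂ (_ : i ≤ j.castSucc), (fun ω => f j (X j.castSucc ω)) ⁻¹' {u j})))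
        * μ (X i ⁻¹' {x i})
      = μ ((⋂ j, ⋂ (_ : j ≤ i), X j ⁻¹' {x j}) ∩
            ⋂ j, ⋂ (_ : j.castSucc < i), (fun ω => f j (X j.castSucc ω)) ⁻¹' {u j})
        * μ ((⋂ j, ⋂ (_ : i ≤ j), X j ⁻¹' {x j}) ∩
            ⋂ j, ⋂ (_ : i ≤ j.castSucc), (fun ω => f j (X j.castSucc ω)) ⁻¹' {u j}))
    (hMCU : ∀ (i : Fin m) (x : ∀ j, SX j) (u : ∀ j, SU j),
      μ ((((⋂ j, ⋂ (_ : j ≤ i.castSucc), X j ⁻¹' {x j}) ∩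
            ⋂ j, ⋂ (_ : j ≤ i), (fun ω => f j (X j.castSucc ω)) ⁻¹' {u j}) ∩
          ((⋂ j, ⋂ (_ : i.castSucc < j), X j ⁻¹' {x j}) ∩
            ⋂ j, ⋂ (_ : i ≤ j), (fun ω => f j (X j.castSucc ω)) ⁻¹' {u j})))
        * μ ((fun ω => f i (X i.castSucc ω)) ⁻¹' {u i})
      = μ ((⋂ j, ⋂ (_ : j ≤ i.castSucc), X j ⁻¹' {x j}) ∩
            ⋂ j, ⋂ (_ : j ≤ i), (fun ω => f j (X j.castSucc ω)) ⁻¹' {u j})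
        * μ ((⋂ j, ⋂ (_ : i.castSucc < j), X j ⁻¹' {x j}) ∩
            ⋂ j, ⋂ (_ : i ≤ j), (fun ω => f j (X j.castSucc ω)) ⁻¹' {u j})) :
    ent μ (fun ω => fun i => X i ω)
      + (∑ i : Fin m, ent μ (fun ω => f i (X i.castSucc ω)))
    = ∑ i, ent μ (X i) := by
  classical
  have hZ : Measurable fun ω i => X i ω := measurable_pi_lambda _ hX
  refine ent_add_sum_ent_eq_sum_ent_of_mul_prod_eq_prod hZ (fun i x => f i (x i.castSucc))
    (fun j x => x j) fun x hx => ?_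
  have hfg' : ∀ᵐ ω ∂μ, ∀ j, f j (X j.castSucc ω) = g j (X j.succ ω) := ae_all_iff.2 hfg
  have hx_link : ∀ j, f j (x j.castSucc) = g j (x j.succ) := by
    obtain ⟨ω, rfl, hω⟩ :=
      Measure.exists_mem_of_measure_ne_zero_of_ae hx (ae_restrict_of_ae hfg')
    exact hω
  refine ENNReal.mul_prod_eq_prod_of_markov hx (measure_ne_top _ _)
    (A := fun k => μ (⋂ j, ⋂ (_ : j ≤ k), X j ⁻¹' {x j}))
    (B := fun k => μ (⋂ j, ⋂ (_ : k ≤ j), X j ⁻¹' {x j})) (fun i => ?_) (fun i => ?_) ?_ ?_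
  · have h := measure_inter_mul_eq_of_ae_eq
      (iInter_preimage_inter_iInter_link_ae_eq (p := fun j => j.castSucc < i) (q := (· ≤ i))
        hfg' hx_link fun j hj => Or.inl hj.le)
      (iInter_preimage_inter_iInter_link_ae_eq (p := fun j => i ≤ j.castSucc) (q := (i ≤ ·))
        hfg' hx_link fun j hj => Or.inl hj)
      (hMCX i x _)
    rwa [Set.iInter_preimage_singleton_inter_iInter_preimage_singleton X x
      fun j => le_total j i] at h
  · have h := measure_inter_mul_eq_of_ae_eq
      (iInter_preimage_inter_iInter_link_ae_eq (p := (· ≤ i)) (q := (· ≤ i.castSucc))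
        hfg' hx_link fun j hj => Or.inl (Fin.castSucc_le_castSucc_iff.2 hj))
      (iInter_preimage_inter_iInter_link_ae_eq (p := (i ≤ ·)) (q := (i.succ ≤ ·))
        hfg' hx_link fun j hj => Or.inr (Fin.succ_le_succ_iff.2 hj))
      (hMCU i x _)
    rwa [Set.iInter_preimage_singleton_inter_iInter_preimage_singleton X x
      fun j => (le_or_gt j i.castSucc).imp_right Fin.castSucc_lt_iff_succ_le.1] at h
  · simp
  · congr 1
    ext ω
    simp [Fin.le_last, funext_iff]

/-- The copy-lemma identity: if `U i := f i (X i) = g i (X (i+1))` a.s. and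
`X 0 → U 0 → X 1 → U 1 → ⋯ → U (m-1) → X m` forms a Markov chain, then
`H(X 0,…,X m) + ∑ H(U i) = ∑ H(X i)`.  The Markov-chain property is expressed as
the conditional independence of the past and the future of the chain given each
intermediate variable. -/
theorem stmt1 {Ω : Type*} [MeasurableSpace Ω] (μ : Measure Ω) [IsProbabilityMeasure μ]
    (m : ℕ) (SX : Fin (m + 1) → Type*) (SU : Fin m → Type*)
    [∀ i, Fintype (SX i)] [∀ i, Fintype (SU i)]
    [∀ i, MeasurableSpace (SX i)] [∀ i, MeasurableSpace (SU i)]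
    [∀ i, MeasurableSingletonClass (SX i)] [∀ i, MeasurableSingletonClass (SU i)]
    (X : ∀ i, Ω → SX i)
    (f : ∀ i : Fin m, SX i.castSucc → SU i) (g : ∀ i : Fin m, SX i.succ → SU i)
    (hX : ∀ i, Measurable (X i))
    (hfg : ∀ i : Fin m, ∀ᵐ ω ∂μ, f i (X i.castSucc ω) = g i (X i.succ ω))
    (hMCX : ∀ (i : Fin (m + 1)) (x : ∀ j, SX j) (u : ∀ j, SU j),
      μ ((((⋂ j, ⋂ (_ : j ≤ i), X j ⁻¹' {x j}) ∩
            ⋂ j, ⋂ (_ : j.castSucc < i), (fun ω => f j (X j.castSucc ω)) ⁻¹' {u j}) ∩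
          ((⋂ j, ⋂ (_ : i ≤ j), X j ⁻¹' {x j}) ∩
            ⋂ j, ⋂ (_ : i ≤ j.castSucc), (fun ω => f j (X j.castSucc ω)) ⁻¹' {u j})))
        * μ (X i ⁻¹' {x i})
      = μ ((⋂ j, ⋂ (_ : j ≤ i), X j ⁻¹' {x j}) ∩
            ⋂ j, ⋂ (_ : j.castSucc < i), (fun ω => f j (X j.castSucc ω)) ⁻¹' {u j})
        * μ ((⋂ j, ⋂ (_ : i ≤ j), X j ⁻¹' {x j}) ∩
            ⋂ j, ⋂ (_ : i ≤ j.castSucc), (fun ω => f j (X j.castSucc ω)) ⁻¹' {u j}))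
    (hMCU : ∀ (i : Fin m) (x : ∀ j, SX j) (u : ∀ j, SU j),
      μ ((((⋂ j, ⋂ (_ : j ≤ i.castSucc), X j ⁻¹' {x j}) ∩
            ⋂ j, ⋂ (_ : j ≤ i), (fun ω => f j (X j.castSucc ω)) ⁻¹' {u j}) ∩
          ((⋂ j, ⋂ (_ : i.castSucc < j), X j ⁻¹' {x j}) ∩
            ⋂ j, ⋂ (_ : i ≤ j), (fun ω => f j (X j.castSucc ω)) ⁻¹' {u j})))
        * μ ((fun ω => f i (X i.castSucc ω)) ⁻¹' {u i})
      = μ ((⋂ j, ⋂ (_ : j ≤ i.castSucc), X j ⁻¹' {x j}) ∩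
            ⋂ j, ⋂ (_ : j ≤ i), (fun ω => f j (X j.castSucc ω)) ⁻¹' {u j})
        * μ ((⋂ j, ⋂ (_ : i.castSucc < j), X j ⁻¹' {x j}) ∩
            ⋂ j, ⋂ (_ : i ≤ j), (fun ω => f j (X j.castSucc ω)) ⁻¹' {u j})) :
    ent μ (fun ω => fun i => X i ω)
      + (∑ i : Fin m, ent μ (fun ω => f i (X i.castSucc ω)))
    = ∑ i, ent μ (X i) :=
  stmt1_general μ m SX SU X f g hX hfg hMCX hMCU
end

section
/- Let A be a finite set, and for i in [1:n-1] let f_i : A → B_i be functions into finite sets B_i. Then the set C = {(a_1,...,a_n) ∈ A^n : f_i(a_i) = f_i(a_{i+1}) for all i ∈ [1:n-1]} satisfies |C| ≥ |A|^n / Π_{i=1}^{n-1} |B_i|. -/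
/-!
Run the random walk that starts at a uniform point of `A` and at step `i` jumps to a uniform
point of the `f i`-fibre of its current position. Each step is doubly stochastic, so every
position is uniformly distributed. The walk only visits `C`, and a path `c` in `C` has
probability `1 / (|A| ∏ᵢ dᵢ(c (i+1)))`, where `dᵢ(x)` is the size of the `f i`-fibre of `x`.
By Jensen's inequality for `log`, `log (|C| / |A|)` is at least `∑ᵢ 𝔼 log dᵢ(c (i+1))
= ∑ᵢ avgₓ log dᵢ(x)`. Applying Jensen again, `avgₓ log dᵢ(x) ≥ -log avgₓ dᵢ(x)⁻¹
≥ log (|A| / |Bᵢ|)`, because `∑ₓ dᵢ(x)⁻¹` counts the image of `f i`.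
-/

open Finset Real

theorem sum_mul_log_le_log_sum_mul {ι : Type*} (s : Finset ι) {p z : ι → ℝ}
    (hp : ∀ i ∈ s, 0 ≤ p i) (hp1 : ∑ i ∈ s, p i = 1) (hz : ∀ i ∈ s, 0 < z i) :
    ∑ i ∈ s, p i * log (z i) ≤ log (∑ i ∈ s, p i * z i) := by
  simpa only [smul_eq_mul] using strictConcaveOn_log_Ioi.concaveOn.le_map_sum hp hp1 hz

section PathWeight

variable {A R : Type*} [CommSemiring R]

def pathWeight {n : ℕ} (P : Fin n → A → A → R) (c : Fin (n + 1) → A) : R :=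
  ∏ i, P i (c i.castSucc) (c i.succ)

theorem pathWeight_cons {n : ℕ} (P : Fin (n + 1) → A → A → R) (x : A) (c : Fin (n + 1) → A) :
    pathWeight P (Fin.cons x c) = P 0 x (c 0) * pathWeight (fun i => P i.succ) c := by
  simp [pathWeight, Fin.prod_univ_succ]

theorem Fintype.sum_fun_fin_succ [Fintype A] {M : Type*} [AddCommMonoid M] {n : ℕ}
    (G : (Fin (n + 1) → A) → M) : ∑ c, G c = ∑ x, ∑ c : Fin n → A, G (Fin.cons x c) := by
  rw [← (Fin.consEquiv fun _ => A).sum_comp, Fintype.sum_prod_type]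
  rfl

theorem sum_pathWeight_mul_apply [Fintype A] {n : ℕ} (P : Fin n → A → A → R)
    (hrow : ∀ i x, ∑ y, P i x y = 1) (hcol : ∀ i y, ∑ x, P i x y = 1)
    (g : A → R) (k : Fin (n + 1)) :
    ∑ c, pathWeight P c * g (c k) = ∑ x, g x := by
  induction n generalizing g with
  | zero =>
    rw [Fin.eq_zero k, ← (Equiv.funUnique (Fin 1) A).symm.sum_comp]
    simp [pathWeight]
  | succ n ih =>
    have ih' := ih (fun i => P i.succ) (fun i => hrow i.succ) (fun i => hcol i.succ)
    simp only [Fintype.sum_fun_fin_succ (n := n + 1), pathWeight_cons]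
    cases k using Fin.cases with
    | zero =>
      refine sum_congr rfl fun x _ => ?_
      simp only [Fin.cons_zero]
      have hx : ∑ c, P 0 x (c 0) * pathWeight (fun i => P i.succ) c = 1 := by
        simp only [mul_comm (P 0 x _), ih', hrow]
      rw [← sum_mul, hx, one_mul]
    | succ j =>
      rw [sum_comm, ← ih' g j]
      refine sum_congr rfl fun c _ => ?_
      simp only [Fin.cons_succ, mul_assoc, ← sum_mul, hcol, one_mul]

theorem sum_pathWeight [Fintype A] {n : ℕ} (P : Fin n → A → A → R)
    (hrow : ∀ i x, ∑ y, P i x y = 1) (hcol : ∀ i y, ∑ x, P i x y = 1) :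
    ∑ c, pathWeight P c = Fintype.card A := by
  simpa using sum_pathWeight_mul_apply P hrow hcol (fun _ => 1) 0

end PathWeight

section Fibers

variable {A B : Type*} [Fintype A] [DecidableEq B] (f : A → B)

def fiberCard (x : A) : ℕ := #{y | f y = f x}

theorem fiberCard_pos (x : A) : 0 < fiberCard f x := card_pos.2 ⟨x, by simp⟩

theorem fiberCard_congr {x y : A} (h : f x = f y) : fiberCard f x = fiberCard f y := by
  simp [fiberCard, h]

noncomputable def fiberKernel (x y : A) : ℝ := if f x = f y then (fiberCard f y : ℝ)⁻¹ else 0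

theorem fiberKernel_nonneg (x y : A) : 0 ≤ fiberKernel f x y := by
  unfold fiberKernel; split_ifs <;> positivity

theorem sum_fiberKernel_left (y : A) : ∑ x, fiberKernel f x y = 1 := by
  simp [fiberKernel, ← sum_filter, fiberCard]

theorem sum_fiberKernel_right (x : A) : ∑ y, fiberKernel f x y = 1 := by
  have : (fiberCard f x : ℝ) ≠ 0 := by exact_mod_cast (fiberCard_pos f x).ne'
  calc ∑ y, fiberKernel f x y = ∑ y, if f x = f y then (fiberCard f x : ℝ)⁻¹ else 0 := by
        refine sum_congr rfl fun y _ => ?_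
        unfold fiberKernel; split_ifs with h
        · rw [fiberCard_congr f h]
        · rfl
    _ = 1 := by
        rw [← sum_filter, sum_const, nsmul_eq_mul]
        simp only [eq_comm (a := f x)]
        exact mul_inv_cancel₀ this

theorem fiberKernel_mul_fiberCard (x y : A) :
    fiberKernel f x y * fiberCard f y = if f x = f y then 1 else 0 := by
  have : (fiberCard f y : ℝ) ≠ 0 := by exact_mod_cast (fiberCard_pos f y).ne'
  unfold fiberKernel; split_ifs <;> simp [this]

theorem sum_inv_fiberCard_le [Fintype B] : ∑ x, (fiberCard f x : ℝ)⁻¹ ≤ Fintype.card B := by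
  rw [← sum_fiberwise univ f, Fintype.card_eq_sum_ones, Nat.cast_sum]
  refine sum_le_sum fun b _ => ?_
  calc ∑ x with f x = b, (fiberCard f x : ℝ)⁻¹ = ∑ x with f x = b, (#{y | f y = b} : ℝ)⁻¹ := by
        refine sum_congr rfl fun x hx => ?_
        simp only [fiberCard, (mem_filter.1 hx).2]
    _ ≤ 1 := by simpa using mul_inv_le_one
    _ = _ := by simp

theorem log_card_div_card_le_sum_log_fiberCard [Fintype B] [Nonempty A] :
    log (Fintype.card A / Fintype.card B) ≤ (∑ x, log (fiberCard f x)) / Fintype.card A := by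
  have ha : (0 : ℝ) < Fintype.card A := by exact_mod_cast Fintype.card_pos
  have hd (x : A) : (0 : ℝ) < (fiberCard f x : ℝ)⁻¹ := by
    have := fiberCard_pos f x; positivity
  have hJ := sum_mul_log_le_log_sum_mul univ (p := fun _ => (Fintype.card A : ℝ)⁻¹)
    (fun _ _ => by positivity) (by simp [ha.ne']) (fun x _ => hd x)
  have hsum : ∑ x, (Fintype.card A : ℝ)⁻¹ * (fiberCard f x : ℝ)⁻¹ ≤
      Fintype.card B / Fintype.card A := by
    rw [← mul_sum, div_eq_inv_mul]
    gcongr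
    exact sum_inv_fiberCard_le f
  have hpos : 0 < ∑ x, (Fintype.card A : ℝ)⁻¹ * (fiberCard f x : ℝ)⁻¹ :=
    sum_pos (fun x _ => by have := hd x; positivity) univ_nonempty
  calc log (Fintype.card A / Fintype.card B) = -log (Fintype.card B / Fintype.card A) := by
        rw [← log_inv, inv_div]
    _ ≤ -log (∑ x, (Fintype.card A : ℝ)⁻¹ * (fiberCard f x : ℝ)⁻¹) :=
        neg_le_neg (log_le_log hpos hsum)
    _ ≤ -∑ x, (Fintype.card A : ℝ)⁻¹ * log (fiberCard f x : ℝ)⁻¹ := neg_le_neg hJ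
    _ = (∑ x, log (fiberCard f x)) / Fintype.card A := by
        simp [log_inv, ← mul_sum, div_eq_inv_mul]

end Fibers

section Chains

variable {n : ℕ} {A : Type*} [Fintype A] {B : Fin n → Type*} [∀ i, DecidableEq (B i)]
  (f : ∀ i, A → B i)

theorem sum_pathWeight_mul_prod_fiberCard :
    ∑ c, pathWeight (fun i => fiberKernel (f i)) c * ∏ i, (fiberCard (f i) (c i.succ) : ℝ) =
      Nat.card {c : Fin (n + 1) → A // ∀ i : Fin n, f i (c i.castSucc) = f i (c i.succ)} := by
  classical
  simp only [pathWeight, ← prod_mul_distrib, fiberKernel_mul_fiberCard, prod_boole]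
  simp [Nat.card_eq_fintype_card, Fintype.card_subtype, sum_boole]

theorem sum_pathWeight_mul_log_prod_fiberCard :
    ∑ c, pathWeight (fun i => fiberKernel (f i)) c * log (∏ i, (fiberCard (f i) (c i.succ) : ℝ)) =
      ∑ i, ∑ x, log (fiberCard (f i) x) := by
  have hlog (c : Fin (n + 1) → A) :
      log (∏ i, (fiberCard (f i) (c i.succ) : ℝ)) = ∑ i, log (fiberCard (f i) (c i.succ)) :=
    log_prod fun i _ => by exact_mod_cast (fiberCard_pos (f i) _).ne'
  simp only [hlog, mul_sum]
  rw [sum_comm]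
  exact sum_congr rfl fun i _ => sum_pathWeight_mul_apply _
    (fun i => sum_fiberKernel_right (f i)) (fun i => sum_fiberKernel_left (f i))
    (fun x => log (fiberCard (f i) x)) i.succ

theorem sum_log_card_div_card_le_log_card_chains [Nonempty A] [∀ i, Fintype (B i)] :
    ∑ i, log (Fintype.card A / Fintype.card (B i)) ≤
      log (Nat.card {c : Fin (n + 1) → A // ∀ i : Fin n, f i (c i.castSucc) = f i (c i.succ)} /
        Fintype.card A) := by
  have ha : (0 : ℝ) < Fintype.card A := by exact_mod_cast Fintype.card_pos
  have hJ := sum_mul_log_le_log_sum_mul univ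
    (p := fun c => pathWeight (fun i => fiberKernel (f i)) c / Fintype.card A)
    (z := fun c => ∏ i, (fiberCard (f i) (c i.succ) : ℝ))
    (fun c _ => div_nonneg (prod_nonneg fun i _ => fiberKernel_nonneg _ _ _) ha.le)
    (by rw [← sum_div, sum_pathWeight _ (fun i => sum_fiberKernel_right (f i))
      (fun i => sum_fiberKernel_left (f i)), div_self ha.ne'])
    (fun c _ => prod_pos fun i _ => by exact_mod_cast fiberCard_pos (f i) _)
  simp only [div_mul_eq_mul_div, ← sum_div, sum_pathWeight_mul_log_prod_fiberCard,
    sum_pathWeight_mul_prod_fiberCard] at hJ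
  calc ∑ i, log (Fintype.card A / Fintype.card (B i))
        ≤ ∑ i, (∑ x, log (fiberCard (f i) x)) / Fintype.card A :=
        sum_le_sum fun i _ => log_card_div_card_le_sum_log_fiberCard (f i)
    _ ≤ _ := by rwa [← sum_div]

end Chains

theorem stmt2 (n : ℕ) (A : Type*) [Fintype A]
    (B : Fin n → Type*) [∀ i, Fintype (B i)]
    (f : ∀ i, A → B i) :
    ((Fintype.card A : ℝ)) ^ (n + 1) / ∏ i, (Fintype.card (B i) : ℝ) ≤
      Nat.card {a : Fin (n + 1) → A //
        ∀ i : Fin n, f i (a i.castSucc) = f i (a i.succ)} := by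
  classical
  rcases isEmpty_or_nonempty A with hA | hA
  · simp
  obtain ⟨x⟩ := id hA
  set C := Nat.card {a : Fin (n + 1) → A // ∀ i : Fin n, f i (a i.castSucc) = f i (a i.succ)}
  have hC : 0 < C := Nat.card_pos_iff.2 ⟨⟨⟨fun _ => x, fun _ => rfl⟩⟩, inferInstance⟩
  have ha : (0 : ℝ) < Fintype.card A := by exact_mod_cast Fintype.card_pos
  have hB (i : Fin n) : (0 : ℝ) < Fintype.card (B i) := by
    have : Nonempty (B i) := ⟨f i x⟩
    exact_mod_cast Fintype.card_pos
  calc (Fintype.card A : ℝ) ^ (n + 1) / ∏ i, (Fintype.card (B i) : ℝ)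
      = Fintype.card A * exp (∑ i, log (Fintype.card A / Fintype.card (B i))) := by
        rw [exp_sum, prod_congr rfl fun i _ => exp_log (div_pos ha (hB i)), prod_div_distrib,
          prod_const, card_univ, Fintype.card_fin, pow_succ', mul_div_assoc]
    _ ≤ Fintype.card A * exp (log (C / Fintype.card A)) := by
        gcongr
        exact sum_log_card_div_card_le_log_card_chains f
    _ = C := by
        rw [exp_log (by positivity)]
        field_simp
end

section
/- If Y is independent of the pair (X, Z), all taking values in an abelian group G, then H(Y) + H(X − Z) ≤ H(X − Y) + H(Y − Z). -/
open MeasureTheory ProbabilityTheory Real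

/-! Let `q, a, b, c` be the laws of `Y, X - Y, Y - Z, X - Z` and `p` the law of `(Y, X, Z)`.
Then `H(X - Y) + H(Y - Z) - H(Y) - H(X - Z) = -∑ p log (a b / (q c))`, which by `log x ≤ x - 1`
is at least `1 - ∑ p a b / (q c)`. Independence factors `p (y, x, z) = q y * r (x, z)`, with `r`
the law of `(X, Z)`, so the last sum is at most `∑ r (x, z) (a ⋆ b) (x - z) / c (x - z)`, which is
at most `∑ (a ⋆ b) = 1` because `c` is the push-forward of `r` under `(x, z) ↦ x - z`. -/

open Finset

lemma mul_log_add_log_sub_log_sub_log_le {p a b q c : ℝ} (hp : 0 ≤ p) (ha : p ≤ a) (hb : p ≤ b)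
    (hq : p ≤ q) (hc : p ≤ c) :
    p * (log a + log b - log q - log c) ≤ p * (a * b / (q * c)) - p := by
  rcases hp.eq_or_lt with rfl | hp
  · simp
  have ha := hp.trans_le ha
  have hb := hp.trans_le hb
  have hq := hp.trans_le hq
  have hc := hp.trans_le hc
  calc p * (log a + log b - log q - log c) = p * log (a * b / (q * c)) := by
        rw [log_div (by positivity) (by positivity), log_mul ha.ne' hb.ne', log_mul hq.ne' hc.ne']
        ring
    _ ≤ p * (a * b / (q * c) - 1) := by gcongr; exact log_le_sub_one_of_pos (by positivity)
    _ = p * (a * b / (q * c)) - p := by ring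

section Convolution

variable {G : Type*} [AddCommGroup G] [Fintype G]

lemma sum_sum_sub_mul_eq_mul_sum (a b : G → ℝ) :
    ∑ w, ∑ v, a (w - v) * b v = (∑ u, a u) * ∑ v, b v := by
  rw [sum_comm, mul_sum]
  refine sum_congr rfl fun v _ => ?_
  rw [← sum_mul, ← Equiv.sum_comp (Equiv.subRight v) a]
  rfl

lemma sum_mul_mul_div_le_one [DecidableEq G] {a b c : G → ℝ} {r : G × G → ℝ}
    (ha : ∀ u, 0 ≤ a u) (hb : ∀ v, 0 ≤ b v) (ha1 : ∑ u, a u = 1) (hb1 : ∑ v, b v = 1)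
    (hc : ∀ w, c w = ∑ s with s.1 - s.2 = w, r s) :
    ∑ t : G × G × G, r t.2 * (a (t.2.1 - t.1) * b (t.1 - t.2.2)) / c (t.2.1 - t.2.2) ≤ 1 := by
  let g : G → ℝ := fun w => ∑ v, a (w - v) * b v
  have hg : ∀ s : G × G, ∑ y, a (s.1 - y) * b (y - s.2) = g (s.1 - s.2) := fun s => by
    rw [← Equiv.sum_comp (Equiv.addRight s.2)]
    refine sum_congr rfl fun v _ => ?_
    rw [Equiv.coe_addRight, add_sub_cancel_right, sub_add_eq_sub_sub, sub_right_comm]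
  have hfib : ∑ s : G × G, r s * (g (s.1 - s.2) / c (s.1 - s.2)) = ∑ w, c w * (g w / c w) := by
    rw [← sum_fiberwise univ (fun s : G × G => s.1 - s.2)]
    refine sum_congr rfl fun w _ => ?_
    calc ∑ s with s.1 - s.2 = w, r s * (g (s.1 - s.2) / c (s.1 - s.2))
        = ∑ s with s.1 - s.2 = w, r s * (g w / c w) :=
          sum_congr rfl fun s hs => by rw [(mem_filter.1 hs).2]
      _ = c w * (g w / c w) := by rw [← sum_mul, hc]
  calc _ = ∑ s : G × G, r s * (g (s.1 - s.2) / c (s.1 - s.2)) := by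
        rw [Fintype.sum_prod_type, sum_comm]
        refine sum_congr rfl fun s _ => ?_
        dsimp only
        rw [← hg, sum_div, mul_sum]
        simp_rw [mul_div_assoc]
    _ = ∑ w, c w * (g w / c w) := hfib
    _ ≤ ∑ w, g w := sum_le_sum fun w _ => by
        rcases eq_or_ne (c w) 0 with h | h
        · rw [h, zero_mul]
          exact sum_nonneg fun v _ => mul_nonneg (ha _) (hb _)
        · rw [mul_div_cancel₀ _ h]
    _ = 1 := by rw [sum_sum_sub_mul_eq_mul_sum, ha1, hb1, one_mul]

end Convolution

section Entropy

variable {Ω α S : Type*} [MeasurableSpace Ω] (μ : Measure Ω) [IsFiniteMeasure μ] {T : Ω → α}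

lemma measureReal_preimage_singleton_le_comp (f : α → S) (t : α) :
    μ.real (T ⁻¹' {t}) ≤ μ.real ((f ∘ T) ⁻¹' {f t}) :=
  measureReal_mono fun ω hω => by simp_all

variable [Fintype α] [MeasurableSpace α] [MeasurableSingletonClass α]

lemma measureReal_comp_preimage_singleton [DecidableEq S] (hT : Measurable T) (f : α → S)
    (s : S) : μ.real ((f ∘ T) ⁻¹' {s}) = ∑ t with f t = s, μ.real (T ⁻¹' {t}) := by
  rw [sum_measureReal_preimage_singleton _ fun t _ => hT (measurableSet_singleton t)]
  congr 1
  ext ω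
  simp

lemma sum_measureReal_preimage_singleton_eq_one [IsProbabilityMeasure μ] (hT : Measurable T) :
    ∑ t, μ.real (T ⁻¹' {t}) = 1 := by
  rw [sum_measureReal_preimage_singleton _ fun t _ => hT (measurableSet_singleton t)]
  simp

lemma ent_comp_eq_neg_sum_s5 [Fintype S] (hT : Measurable T) (f : α → S) :
    ent μ (f ∘ T) = -∑ t, μ.real (T ⁻¹' {t}) * log (μ.real ((f ∘ T) ⁻¹' {f t})) := by
  classical
  rw [ent, ← sum_fiberwise univ f, ← sum_neg_distrib]
  refine sum_congr rfl fun s _ => ?_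
  calc negMulLog (μ.real ((f ∘ T) ⁻¹' {s}))
      = -((∑ t with f t = s, μ.real (T ⁻¹' {t})) * log (μ.real ((f ∘ T) ⁻¹' {s}))) := by
        rw [negMulLog, neg_mul, measureReal_comp_preimage_singleton μ hT]
    _ = _ := by
        rw [sum_mul]
        congr 1
        exact sum_congr rfl fun t ht => by rw [(mem_filter.1 ht).2]

lemma ent_add_ent_le_ent_add_ent_of_sum_le_one [IsProbabilityMeasure μ] [Fintype S]
    (hT : Measurable T) (fa fb fq fc : α → S)
    (h : ∑ t, μ.real (T ⁻¹' {t}) * (μ.real ((fa ∘ T) ⁻¹' {fa t}) * μ.real ((fb ∘ T) ⁻¹' {fb t}) /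
      (μ.real ((fq ∘ T) ⁻¹' {fq t}) * μ.real ((fc ∘ T) ⁻¹' {fc t}))) ≤ 1) :
    ent μ (fq ∘ T) + ent μ (fc ∘ T) ≤ ent μ (fa ∘ T) + ent μ (fb ∘ T) := by
  have hle := fun f t => measureReal_preimage_singleton_le_comp μ (T := T) (S := S) f t
  have hsum := sum_le_sum fun t (_ : t ∈ univ) => mul_log_add_log_sub_log_sub_log_le
    measureReal_nonneg (hle fa t) (hle fb t) (hle fq t) (hle fc t)
  simp only [mul_add, mul_sub, sum_add_distrib, sum_sub_distrib,
    sum_measureReal_preimage_singleton_eq_one μ hT] at hsum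
  simp only [ent_comp_eq_neg_sum_s5 μ hT]
  linarith

end Entropy

lemma ProbabilityTheory.IndepFun.measureReal_preimage_singleton_prodMk {Ω β γ : Type*}
    [MeasurableSpace Ω] [MeasurableSpace β] [MeasurableSpace γ] [MeasurableSingletonClass β]
    [MeasurableSingletonClass γ] {μ : Measure Ω} {Y : Ω → β} {W : Ω → γ} (h : IndepFun Y W μ)
    (y : β) (w : γ) :
    μ.real ((fun ω => (Y ω, W ω)) ⁻¹' {(y, w)}) = μ.real (Y ⁻¹' {y}) * μ.real (W ⁻¹' {w}) := by
  rw [← Set.singleton_prod_singleton, Set.mk_preimage_prod, measureReal_def,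
    h.measure_inter_preimage_eq_mul _ _ (measurableSet_singleton y) (measurableSet_singleton w),
    ENNReal.toReal_mul]
  rfl

theorem stmt5 {Ω G : Type*} [MeasurableSpace Ω] [AddCommGroup G] [Fintype G]
    [MeasurableSpace G] [MeasurableSingletonClass G]
    (μ : Measure Ω) [IsProbabilityMeasure μ]
    (X Y Z : Ω → G) (hX : Measurable X) (hY : Measurable Y) (hZ : Measurable Z)
    (hind : IndepFun Y (fun ω => (X ω, Z ω)) μ) :
    ent μ Y + ent μ (fun ω => X ω - Z ω) ≤
      ent μ (fun ω => X ω - Y ω) + ent μ (fun ω => Y ω - Z ω) := by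
  classical
  have hXZ : Measurable fun ω => (X ω, Z ω) := hX.prodMk hZ
  refine ent_add_ent_le_ent_add_ent_of_sum_le_one μ (T := fun ω => (Y ω, X ω, Z ω))
    (hY.prodMk hXZ) (fun t => t.2.1 - t.1) (fun t => t.1 - t.2.2) Prod.fst
    (fun t => t.2.1 - t.2.2) ?_
  refine (sum_le_sum fun ⟨y, s⟩ _ => ?_).trans (sum_mul_mul_div_le_one
    (a := fun u => μ.real ((fun ω => X ω - Y ω) ⁻¹' {u}))
    (b := fun v => μ.real ((fun ω => Y ω - Z ω) ⁻¹' {v}))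
    (fun _ => measureReal_nonneg) (fun _ => measureReal_nonneg)
    (sum_measureReal_preimage_singleton_eq_one μ (hX.sub hY))
    (sum_measureReal_preimage_singleton_eq_one μ (hY.sub hZ))
    (measureReal_comp_preimage_singleton μ hXZ fun s => s.1 - s.2))
  dsimp only [Function.comp_def]
  rw [hind.measureReal_preimage_singleton_prodMk]
  exact (mul_div_mul_left_le (c := μ.real (Y ⁻¹' {y})) (by positivity)).trans_eq' (by ring)
end

section
/- If X, Y, Z are mutually independent random variables with finite support on an abelian group G, then H(X) + H(Y + Z) ≤ H(X + Y) + H(X + Z). -/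
/-!
Adding an independent summand does not decrease entropy, so H(Y + Z) ≤ H(X + Y + Z), and it
remains to show H(X) + H(X + Y + Z) ≤ H(X + Y) + H(X + Z). This is submodularity of entropy,
H(A, B) + H(C) ≤ H(A) + H(B) whenever C is a function of A and of B, applied to
A = (X + Y, Z), B = (X + Z, Y) and C = X + Y + Z: by independence H(A, B) = H(X, Y, Z) =
H(X) + H(Y) + H(Z), H(A) = H(X + Y) + H(Z) and H(B) = H(X + Z) + H(Y). Submodularity is Gibbs'
inequality between the joint law of (A, B) and the law under which A and B are conditionally
independent given C.
-/

open MeasureTheory ProbabilityTheory Real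

open Finset Function

lemma Real.mul_log_le_mul_log_add_sub {x y : ℝ} (hx : 0 ≤ x) (hy : 0 ≤ y)
    (hxy : x ≠ 0 → y ≠ 0) : x * log y ≤ x * log x + (y - x) := by
  rcases hx.eq_or_lt with rfl | hx
  · simpa using hy
  have hy : 0 < y := hy.lt_of_ne' (hxy hx.ne')
  have h := mul_le_mul_of_nonneg_left (log_le_sub_one_of_pos (div_pos hy hx)) hx.le
  rw [log_div hy.ne' hx.ne', mul_sub, mul_sub, mul_one, mul_div_cancel₀ _ hx.ne'] at h
  linarith

theorem Real.sum_mul_log_le_sum_mul_log {ι : Type*} [Fintype ι] {f g : ι → ℝ}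
    (hf : ∀ i, 0 ≤ f i) (hg : ∀ i, 0 ≤ g i) (hfg : ∀ i, f i ≠ 0 → g i ≠ 0)
    (hsum : ∑ i, g i ≤ ∑ i, f i) :
    ∑ i, f i * log (g i) ≤ ∑ i, f i * log (f i) :=
  calc ∑ i, f i * log (g i) ≤ ∑ i, (f i * log (f i) + (g i - f i)) :=
        sum_le_sum fun i _ => mul_log_le_mul_log_add_sub (hf i) (hg i) (hfg i)
    _ ≤ ∑ i, f i * log (f i) := by
        rw [sum_add_distrib, sum_sub_distrib]
        linarith

section Law

variable {Ω α γ : Type*} [MeasurableSpace Ω] {μ : Measure Ω}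
  [Fintype α] [MeasurableSpace α] [MeasurableSingletonClass α]

lemma sum_measureReal_preimage_mul_comp [IsFiniteMeasure μ] [Fintype γ] {A : Ω → α}
    (hA : Measurable A) (F : α → γ) (h : γ → ℝ) :
    ∑ a, μ.real (A ⁻¹' {a}) * h (F a) = ∑ c, μ.real ((fun ω => F (A ω)) ⁻¹' {c}) * h c := by
  classical
  have hfiber : ∀ c, μ.real ((fun ω => F (A ω)) ⁻¹' {c}) =
      ∑ a with F a = c, μ.real (A ⁻¹' {a}) := by
    intro c
    rw [sum_measureReal_preimage_singleton _ fun a _ => hA (measurableSet_singleton a)]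
    congr 1
    ext ω
    simp
  simp_rw [hfiber, sum_mul]
  rw [← sum_fiberwise univ F]
  refine sum_congr rfl fun c _ => sum_congr rfl fun a ha => ?_
  rw [(mem_filter.1 ha).2]

lemma sum_measureReal_preimage_eq_one [IsProbabilityMeasure μ] {A : Ω → α} (hA : Measurable A) :
    ∑ a, μ.real (A ⁻¹' {a}) = 1 := by
  rw [sum_measureReal_preimage_singleton _ fun a _ => hA (measurableSet_singleton a)]
  simp

end Law

lemma measureReal_preimage_prodMk_singleton {Ω α β : Type*} [MeasurableSpace Ω] {μ : Measure Ω}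
    [MeasurableSpace α] [MeasurableSingletonClass α] [MeasurableSpace β]
    [MeasurableSingletonClass β] {A : Ω → α} {B : Ω → β} (hAB : IndepFun A B μ) (a : α) (b : β) :
    μ.real ((fun ω => (A ω, B ω)) ⁻¹' {(a, b)}) = μ.real (A ⁻¹' {a}) * μ.real (B ⁻¹' {b}) := by
  rw [← Set.singleton_prod_singleton, Set.mk_preimage_prod, measureReal_def,
    hAB.measure_inter_preimage_eq_mul _ _ (measurableSet_singleton a) (measurableSet_singleton b),
    ENNReal.toReal_mul, measureReal_def, measureReal_def]

section CondIndepLaw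

variable {Ω α β γ : Type*} [MeasurableSpace Ω] {μ : Measure Ω}

open Classical in
/-- The law on `α × β` of a pair with the marginals of `A` and `B` that are conditionally
independent given the common value `φ a = ψ b`. -/
noncomputable def condIndepLaw (μ : Measure Ω) (A : Ω → α) (B : Ω → β) (φ : α → γ) (ψ : β → γ)
    (i : α × β) : ℝ :=
  if φ i.1 = ψ i.2 then
    μ.real (A ⁻¹' {i.1}) * μ.real (B ⁻¹' {i.2}) / μ.real ((fun ω => φ (A ω)) ⁻¹' {φ i.1})
  else 0

variable {A : Ω → α} {B : Ω → β} {φ : α → γ} {ψ : β → γ}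

lemma condIndepLaw_nonneg (i : α × β) : 0 ≤ condIndepLaw μ A B φ ψ i := by
  unfold condIndepLaw
  split_ifs <;> positivity

variable [IsFiniteMeasure μ]

lemma pos_of_measureReal_prodMk_ne_zero (hφψ : ∀ ω, φ (A ω) = ψ (B ω)) {a : α} {b : β}
    (h : μ.real ((fun ω => (A ω, B ω)) ⁻¹' {(a, b)}) ≠ 0) :
    φ a = ψ b ∧ 0 < μ.real (A ⁻¹' {a}) ∧ 0 < μ.real (B ⁻¹' {b}) ∧
      0 < μ.real ((fun ω => φ (A ω)) ⁻¹' {φ a}) := by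
  have hpos := measureReal_nonneg.lt_of_ne' h
  obtain ⟨ω, hω⟩ : ((fun ω => (A ω, B ω)) ⁻¹' {(a, b)}).Nonempty :=
    Set.nonempty_iff_ne_empty.2 fun he => h (by simp [he])
  obtain ⟨rfl, rfl⟩ := Prod.mk.inj hω
  have hApos : 0 < μ.real (A ⁻¹' {A ω}) :=
    hpos.trans_le (measureReal_mono fun ω' hω' => congrArg Prod.fst hω')
  refine ⟨hφψ ω, hApos, hpos.trans_le (measureReal_mono fun ω' hω' => congrArg Prod.snd hω'),
    hApos.trans_le (measureReal_mono fun ω' hω' => congrArg φ hω')⟩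

lemma condIndepLaw_pos (hφψ : ∀ ω, φ (A ω) = ψ (B ω)) {i : α × β}
    (h : μ.real ((fun ω => (A ω, B ω)) ⁻¹' {i}) ≠ 0) : 0 < condIndepLaw μ A B φ ψ i := by
  obtain ⟨hab, hA, hB, hC⟩ := pos_of_measureReal_prodMk_ne_zero hφψ h
  rw [condIndepLaw, if_pos hab]
  positivity

end CondIndepLaw

section Entropy

variable {Ω α β γ : Type*} [MeasurableSpace Ω] {μ : Measure Ω} [Fintype α] [Fintype β]

lemma ent_eq_sum_negMulLog (A : Ω → α) :
    ent μ A = ∑ a, negMulLog (μ.real (A ⁻¹' {a})) := rfl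

lemma ent_eq_neg_sum_mul_log (A : Ω → α) :
    ent μ A = -∑ a, μ.real (A ⁻¹' {a}) * log (μ.real (A ⁻¹' {a})) := by
  simp [ent_eq_sum_negMulLog, negMulLog, sum_neg_distrib]

lemma ent_comp_of_injective {f : α → β} (hf : Injective f) (A : Ω → α) :
    ent μ (fun ω => f (A ω)) = ent μ A := by
  refine (Fintype.sum_of_injective f hf _ _ (fun b hb => ?_) fun a => ?_).symm
  · have : (fun ω => f (A ω)) ⁻¹' {b} = ∅ :=
      Set.eq_empty_of_forall_notMem fun ω hω => hb ⟨A ω, hω⟩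
    simp [this]
  · congr 3
    ext ω
    simp [hf.eq_iff]

variable [MeasurableSpace α] [MeasurableSingletonClass α]
  [MeasurableSpace β] [MeasurableSingletonClass β] [IsProbabilityMeasure μ]

lemma ent_prodMk_of_indepFun {A : Ω → α} {B : Ω → β} (hA : Measurable A) (hB : Measurable B)
    (hAB : IndepFun A B μ) :
    ent μ (fun ω => (A ω, B ω)) = ent μ A + ent μ B := by
  simp only [ent_eq_sum_negMulLog, Fintype.sum_prod_type,
    measureReal_preimage_prodMk_singleton hAB, negMulLog_mul, sum_add_distrib, ← sum_mul,
    ← mul_sum, sum_measureReal_preimage_eq_one hA, sum_measureReal_preimage_eq_one hB]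
  ring

variable [Fintype γ] {A : Ω → α} {B : Ω → β} {φ : α → γ} {ψ : β → γ}

lemma sum_condIndepLaw (hA : Measurable A) (hB : Measurable B)
    (hφψ : ∀ ω, φ (A ω) = ψ (B ω)) : ∑ i, condIndepLaw μ A B φ ψ i = 1 := by
  classical
  have hfiber_B : ∀ a, ∑ b, condIndepLaw μ A B φ ψ (a, b) =
      μ.real (A ⁻¹' {a}) * (μ.real ((fun ω => φ (A ω)) ⁻¹' {φ a}) /
        μ.real ((fun ω => φ (A ω)) ⁻¹' {φ a})) := by
    intro a
    have hψ := sum_measureReal_preimage_mul_comp (μ := μ) hB ψ fun c => if c = φ a then 1 else 0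
    simp only [← funext hφψ, mul_ite, mul_one, mul_zero, sum_ite_eq', mem_univ, if_true] at hψ
    calc ∑ b, condIndepLaw μ A B φ ψ (a, b)
        = μ.real (A ⁻¹' {a}) / μ.real ((fun ω => φ (A ω)) ⁻¹' {φ a}) *
            ∑ b, if ψ b = φ a then μ.real (B ⁻¹' {b}) else 0 := by
          rw [mul_sum]
          refine sum_congr rfl fun b _ => ?_
          simp only [condIndepLaw, eq_comm (a := φ a)]
          split_ifs <;> ring
      _ = _ := by rw [hψ]; ring
  have hC := sum_measureReal_preimage_mul_comp (μ := μ) hA φ fun _ => 1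
  simp only [mul_one, sum_measureReal_preimage_eq_one hA] at hC
  rw [Fintype.sum_prod_type]
  simp_rw [hfiber_B]
  rw [sum_measureReal_preimage_mul_comp hA φ fun c => μ.real ((fun ω => φ (A ω)) ⁻¹' {c}) /
    μ.real ((fun ω => φ (A ω)) ⁻¹' {c})]
  simp_rw [mul_div_assoc', mul_self_div_self]
  exact hC.symm

theorem ent_prodMk_add_ent_le (hA : Measurable A) (hB : Measurable B)
    (hφψ : ∀ ω, φ (A ω) = ψ (B ω)) :
    ent μ (fun ω => (A ω, B ω)) + ent μ (fun ω => φ (A ω)) ≤ ent μ A + ent μ B := by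
  have hAB : Measurable fun ω => (A ω, B ω) := hA.prodMk hB
  set p := fun i : α × β => μ.real ((fun ω => (A ω, B ω)) ⁻¹' {i})
  have hlog : ∀ i, p i * log (condIndepLaw μ A B φ ψ i) =
      p i * log (μ.real (A ⁻¹' {i.1})) + p i * log (μ.real (B ⁻¹' {i.2})) -
        p i * log (μ.real ((fun ω => φ (A ω)) ⁻¹' {φ i.1})) := by
    rintro ⟨a, b⟩
    by_cases h : p (a, b) = 0
    · simp [h]
    obtain ⟨hab, hA, hB, hC⟩ := pos_of_measureReal_prodMk_ne_zero hφψ h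
    rw [condIndepLaw, if_pos hab, log_div (by positivity) hC.ne', log_mul hA.ne' hB.ne']
    ring
  have hgibbs := sum_mul_log_le_sum_mul_log (f := p) (fun _ => measureReal_nonneg)
    condIndepLaw_nonneg (fun i h => (condIndepLaw_pos hφψ h).ne')
    (by rw [sum_condIndepLaw hA hB hφψ, sum_measureReal_preimage_eq_one hAB])
  simp only [hlog, sum_sub_distrib, sum_add_distrib, p,
    sum_measureReal_preimage_mul_comp hAB Prod.fst fun a => log (μ.real (A ⁻¹' {a})),
    sum_measureReal_preimage_mul_comp hAB Prod.snd fun b => log (μ.real (B ⁻¹' {b})),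
    sum_measureReal_preimage_mul_comp hAB (fun i => φ i.1)
      fun c => log (μ.real ((fun ω => φ (A ω)) ⁻¹' {c}))] at hgibbs
  simp only [ent_eq_neg_sum_mul_log]
  linarith

lemma ent_prodMk_le (hA : Measurable A) (hB : Measurable B) :
    ent μ (fun ω => (A ω, B ω)) ≤ ent μ A + ent μ B := by
  have h := ent_prodMk_add_ent_le (μ := μ) (φ := fun _ => ()) (ψ := fun _ => ()) hA hB fun _ => rfl
  have h0 : ent μ (fun _ => ()) = 0 := by simp [ent_eq_sum_negMulLog]
  linarith

end Entropy

section Sums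

variable {Ω G : Type*} [MeasurableSpace Ω] {μ : Measure Ω} [IsProbabilityMeasure μ]
  [Fintype G] [MeasurableSpace G] [MeasurableSingletonClass G]

lemma ent_le_ent_add_of_indepFun [AddGroup G] {X W : Ω → G} (hX : Measurable X)
    (hW : Measurable W) (h : IndepFun X W μ) : ent μ W ≤ ent μ (fun ω => X ω + W ω) := by
  have hinj : Injective fun i : G × G => (i.2 + i.1, i.2) := by
    rintro ⟨w, x⟩ ⟨w', x'⟩ hi
    obtain ⟨hw, rfl⟩ := Prod.mk.inj hi
    simpa using hw
  have hpair : ent μ (fun ω => (X ω + W ω, X ω)) = ent μ W + ent μ X := by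
    rw [← ent_prodMk_of_indepFun hW hX h.symm]
    exact ent_comp_of_injective hinj fun ω => (W ω, X ω)
  have hXW : Measurable fun ω => X ω + W ω := hX.add hW
  have := ent_prodMk_le (μ := μ) hXW hX
  linarith

lemma ent_add_ent_add_add_le [AddCommGroup G] {X Y Z : Ω → G} (hX : Measurable X)
    (hY : Measurable Y) (hZ : Measurable Z) (h : iIndepFun ![X, Y, Z] μ) :
    ent μ X + ent μ (fun ω => X ω + Y ω + Z ω) ≤
      ent μ (fun ω => X ω + Y ω) + ent μ (fun ω => X ω + Z ω) := by
  have hmeas : ∀ i, Measurable (![X, Y, Z] i) := fun i => by fin_cases i <;> assumption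
  have hinj : Injective fun i : G × G × G => ((i.1 + i.2.1, i.2.2), (i.1 + i.2.2, i.2.1)) := by
    rintro ⟨x, y, z⟩ ⟨x', y', z'⟩ hi
    simp only [Prod.mk.injEq] at hi
    obtain ⟨⟨hxy, rfl⟩, -, rfl⟩ := hi
    simpa using hxy
  have hXYZ : ent μ (fun ω => ((X ω + Y ω, Z ω), (X ω + Z ω, Y ω))) =
      ent μ X + (ent μ Y + ent μ Z) := by
    rw [← ent_prodMk_of_indepFun hY hZ (h.indepFun (i := 1) (j := 2) (by decide)),
      ← ent_prodMk_of_indepFun hX (hY.prodMk hZ)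
        (h.indepFun_prodMk hmeas 1 2 0 (by decide) (by decide)).symm]
    exact ent_comp_of_injective hinj fun ω => (X ω, Y ω, Z ω)
  have hXY : Measurable fun ω => X ω + Y ω := hX.add hY
  have hXZ : Measurable fun ω => X ω + Z ω := hX.add hZ
  have hXY_Z := ent_prodMk_of_indepFun hXY hZ
    (h.indepFun_add_left hmeas 0 1 2 (by decide) (by decide))
  have hXZ_Y := ent_prodMk_of_indepFun hXZ hY
    (h.indepFun_add_left hmeas 0 2 1 (by decide) (by decide))
  have hsub : ent μ (fun ω => ((X ω + Y ω, Z ω), (X ω + Z ω, Y ω))) +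
      ent μ (fun ω => X ω + Y ω + Z ω) ≤
        ent μ (fun ω => (X ω + Y ω, Z ω)) + ent μ (fun ω => (X ω + Z ω, Y ω)) :=
    ent_prodMk_add_ent_le (φ := fun i : G × G => i.1 + i.2) (ψ := fun i : G × G => i.1 + i.2)
      (hXY.prodMk hZ) (hXZ.prodMk hY) fun ω => add_right_comm _ _ _
  linarith

end Sums

theorem stmt6 {Ω G : Type*} [MeasurableSpace Ω] [AddCommGroup G] [Fintype G]
    [MeasurableSpace G] [MeasurableSingletonClass G]
    (μ : Measure Ω) [IsProbabilityMeasure μ]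
    (X Y Z : Ω → G) (hX : Measurable X) (hY : Measurable Y) (hZ : Measurable Z)
    (hind : iIndepFun ![X, Y, Z] μ) :
    ent μ X + ent μ (fun ω => Y ω + Z ω) ≤
      ent μ (fun ω => X ω + Y ω) + ent μ (fun ω => X ω + Z ω) := by
  have hmeas : ∀ i, Measurable (![X, Y, Z] i) := fun i => by fin_cases i <;> assumption
  have hX_YZ : IndepFun X (fun ω => Y ω + Z ω) μ :=
    (hind.indepFun_add_left hmeas 1 2 0 (by decide) (by decide)).symm
  calc ent μ X + ent μ (fun ω => Y ω + Z ω)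
      ≤ ent μ X + ent μ (fun ω => X ω + (Y ω + Z ω)) := by
        gcongr
        exact ent_le_ent_add_of_indepFun hX (hY.add hZ) hX_YZ
    _ = ent μ X + ent μ (fun ω => X ω + Y ω + Z ω) := by simp only [add_assoc]
    _ ≤ ent μ (fun ω => X ω + Y ω) + ent μ (fun ω => X ω + Z ω) :=
        ent_add_ent_add_add_le hX hY hZ hind
end

section
/- Suppose X and Y are random variables with finite support on an abelian group G. Then H(X − Y) ≤ (2/3) H(X) + (2/3) H(Y) + (1/2) H(X + Y). -/
/-!
Take two copies `(X₁, Y₁)`, `(X₂, Y₂)` of `(X, Y)` that are conditionally independent given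
`X + Y`, so that `X₁ + Y₁ = X₂ + Y₂` and `K := H(X₁, Y₁, X₂, Y₂) = 2 H(X, Y) - H(X + Y)`.
The quadruple is determined by each of `(X₁, Y₁, X₁ - Y₂)`, `(X₁, Y₁, X₁ - X₂)` and
`(X₁, X₁ - Y₂, X₁ - Y₁)`, so submodularity of entropy gives
`K + H(X₁ - Y₂) ≤ 2 H(X) + 2 H(Y)`, `K + H(X₁ - X₂) ≤ 2 H(X) + 2 H(Y)` and, since
`X₁ - Y₁ = (X₁ - Y₂) + (X₁ - X₂)`, `K + H(X - Y) ≤ H(X, Y) + H(X₁ - Y₂) + H(X₁ - X₂)`.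
Adding up and using `H(X - Y) ≤ H(X, Y)` yields `6 H(X - Y) ≤ 4 H(X) + 4 H(Y) + 3 H(X + Y)`.

Random variables are modelled as functions `f` on a finite sample space carrying real weights
`p`; `entropy p f` is the entropy of the push-forward `law p f`.
-/

open MeasureTheory ProbabilityTheory Real

open Finset

namespace DiscreteEntropy

variable {A B C D : Type*} [Fintype A] [DecidableEq B] [DecidableEq C] [DecidableEq D]

def law (p : A → ℝ) (f : A → B) (b : B) : ℝ := ∑ a with f a = b, p a

noncomputable def entropy [Fintype B] (p : A → ℝ) (f : A → B) : ℝ := ∑ b, negMulLog (law p f b)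

variable {p : A → ℝ}

lemma law_nonneg (hp : ∀ a, 0 ≤ p a) (f : A → B) (b : B) : 0 ≤ law p f b :=
  sum_nonneg fun a _ => hp a

lemma le_law (hp : ∀ a, 0 ≤ p a) (f : A → B) (a : A) : p a ≤ law p f (f a) :=
  single_le_sum (fun a _ => hp a) (by simp)

lemma law_pos (hp : ∀ a, 0 ≤ p a) (f : A → B) {a : A} (ha : 0 < p a) : 0 < law p f (f a) :=
  ha.trans_le (le_law hp f a)

lemma law_self [DecidableEq A] (a : A) : law p (fun a => a) a = p a := by
  simp [law, filter_eq']

lemma sum_law [Fintype B] (f : A → B) : ∑ b, law p f b = ∑ a, p a :=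
  sum_fiberwise _ _ _

lemma sum_law_pair [Fintype B] (f : A → B) (h : A → C) (c : C) :
    ∑ b, law p (fun a => (f a, h a)) (b, c) = law p h c := by
  rw [law, ← sum_fiberwise _ f]
  simp only [law, filter_filter, Prod.ext_iff]
  congr! 3 with b a
  exact and_comm

lemma law_le_law_comp (hp : ∀ a, 0 ≤ p a) (h : A → C) (g : C → B) (c : C) :
    law p h c ≤ law p (fun a => g (h a)) (g c) :=
  sum_le_sum_of_subset_of_nonneg (fun a ha => by simp_all) fun a _ _ => hp a

lemma law_congr {f f' : A → B} (h : ∀ a, p a ≠ 0 → f a = f' a) : law p f = law p f' := by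
  ext b
  simp only [law, sum_filter]
  refine sum_congr rfl fun a _ => ?_
  by_cases ha : p a = 0
  · simp [ha]
  · rw [h a ha]

lemma sum_mul_div_law_le [Fintype B] (hp : ∀ a, 0 ≤ p a) (f : A → B) {φ : B → ℝ}
    (hφ : ∀ b, 0 ≤ φ b) : ∑ a, p a * φ (f a) / law p f (f a) ≤ ∑ b, φ b := by
  rw [← sum_fiberwise _ f]
  refine sum_le_sum fun b _ => ?_
  have : ∑ a with f a = b, p a * φ (f a) / law p f (f a) = law p f b * φ b / law p f b := by
    rw [law, sum_mul, sum_div]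
    exact sum_congr rfl fun a ha => by rw [(mem_filter.1 ha).2]; rfl
  rw [this]
  rcases (law_nonneg hp f b).eq_or_lt with h0 | h0
  · simp [← h0, hφ b]
  · rw [mul_div_cancel_left₀ _ h0.ne']

lemma entropy_eq_sum_mul_neg_log [Fintype B] (f : A → B) :
    entropy p f = ∑ a, p a * -log (law p f (f a)) := by
  rw [entropy, ← sum_fiberwise _ f]
  refine sum_congr rfl fun b _ => ?_
  rw [negMulLog, neg_mul, ← mul_neg, law, sum_mul]
  exact sum_congr rfl fun a ha => by rw [(mem_filter.1 ha).2]; rfl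

variable [Fintype B] [Fintype C] [Fintype D]

lemma entropy_comp_le (hp : ∀ a, 0 ≤ p a) (h : A → C) (g : C → B) :
    entropy p (fun a => g (h a)) ≤ entropy p h := by
  simp only [entropy_eq_sum_mul_neg_log]
  refine sum_le_sum fun a _ => ?_
  rcases (hp a).eq_or_lt with h0 | h0
  · simp [← h0]
  · exact mul_le_mul_of_nonneg_left
      (neg_le_neg (log_le_log (law_pos hp h h0) (law_le_law_comp hp h g _))) h0.le

lemma entropy_le_of_comp (hp : ∀ a, 0 ≤ p a) {f : A → B} {h : A → C} (g : C → B)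
    (hfg : ∀ a, p a ≠ 0 → f a = g (h a)) : entropy p f ≤ entropy p h := by
  rw [entropy, law_congr hfg]
  exact entropy_comp_le hp h g

lemma entropy_submodular (hp : ∀ a, 0 ≤ p a) (f : A → B) (g : A → C) (h : A → D) :
    entropy p (fun a => (f a, g a, h a)) + entropy p h ≤
      entropy p (fun a => (f a, h a)) + entropy p (fun a => (g a, h a)) := by
  set P := law p (fun a => (f a, g a, h a))
  set Pfh := law p (fun a => (f a, h a))
  set Pgh := law p (fun a => (g a, h a))
  set Ph := law p h
  -- Gibbs' inequality `log x ≤ x - 1` against the law `Q` making `f` and `g` independent given `h`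
  set Q : B × C × D → ℝ := fun x => Pfh (x.1, x.2.2) * Pgh (x.2.1, x.2.2) / Ph x.2.2
  have hQ : ∑ x, Q x = ∑ a, p a := calc
    ∑ x, Q x = ∑ d, (∑ b, Pfh (b, d)) * (∑ c, Pgh (c, d)) / Ph d := by
      simp only [Q, Fintype.sum_prod_type, sum_mul_sum, sum_div]
      exact (sum_congr rfl fun _ _ => sum_comm).trans sum_comm
    _ = ∑ d, Ph d := by simp only [Pfh, Pgh, Ph, sum_law_pair, mul_self_div_self]
    _ = ∑ a, p a := sum_law h
  have key : ∀ a, p a * -log (P (f a, g a, h a)) + p a * -log (Ph (h a)) ≤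
      p a * -log (Pfh (f a, h a)) + p a * -log (Pgh (g a, h a)) +
        (p a * Q (f a, g a, h a) / P (f a, g a, h a) - p a) := by
    intro a
    rcases (hp a).eq_or_lt with h0 | h0
    · simp [← h0]
    have hP := law_pos hp (fun a => (f a, g a, h a)) h0
    have hPfh := law_pos hp (fun a => (f a, h a)) h0
    have hPgh := law_pos hp (fun a => (g a, h a)) h0
    have hPh := law_pos hp h h0
    have hlog := mul_le_mul_of_nonneg_left
      (log_le_sub_one_of_pos (x := Pfh (f a, h a) * Pgh (g a, h a) / (P (f a, g a, h a) * Ph (h a)))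
        (by positivity)) h0.le
    rw [log_div (by positivity) (by positivity), log_mul hPfh.ne' hPgh.ne',
      log_mul hP.ne' hPh.ne'] at hlog
    have hQa : p a * Q (f a, g a, h a) / P (f a, g a, h a) =
        p a * (Pfh (f a, h a) * Pgh (g a, h a) / (P (f a, g a, h a) * Ph (h a))) := by
      simp only [Q]; ring
    rw [hQa]
    linarith
  have hsum := sum_le_sum fun a (_ : a ∈ univ) => key a
  have hR := sum_mul_div_law_le hp (fun a => (f a, g a, h a)) (φ := Q)
    fun x => div_nonneg (mul_nonneg (law_nonneg hp _ _) (law_nonneg hp _ _)) (law_nonneg hp _ _)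
  simp only [sum_add_distrib, sum_sub_distrib] at hsum
  simp only [entropy_eq_sum_mul_neg_log]
  linarith

lemma entropy_const_unit : entropy p (fun _ => ()) = negMulLog (∑ a, p a) := by
  simp [entropy, law]

lemma entropy_pair_le (hp : ∀ a, 0 ≤ p a) (hp1 : ∑ a, p a = 1) (f : A → B) (g : A → C) :
    entropy p (fun a => (f a, g a)) ≤ entropy p f + entropy p g := by
  have h := entropy_submodular hp f g (fun _ => ())
  have e1 : entropy p (fun a => (f a, g a)) ≤ entropy p (fun a => (f a, g a, ())) :=
    entropy_le_of_comp hp (fun x => (x.1, x.2.1)) fun _ _ => rfl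
  have e2 : entropy p (fun a => (f a, ())) ≤ entropy p f :=
    entropy_le_of_comp hp (fun b => (b, ())) fun _ _ => rfl
  have e3 : entropy p (fun a => (g a, ())) ≤ entropy p g :=
    entropy_le_of_comp hp (fun c => (c, ())) fun _ _ => rfl
  rw [entropy_const_unit, hp1, negMulLog_one] at h
  linarith

section Marginals

variable {A' : Type*} [Fintype A'] {q : A × A' → ℝ} {p' : A' → ℝ}

lemma sum_mul_fst (hq : ∀ u, ∑ v, q (u, v) = p u) (ψ : A → ℝ) :
    ∑ w, q w * ψ w.1 = ∑ u, p u * ψ u := by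
  simp only [Fintype.sum_prod_type, ← sum_mul, hq]

lemma sum_mul_snd (hq : ∀ v, ∑ u, q (u, v) = p' v) (ψ : A' → ℝ) :
    ∑ w, q w * ψ w.2 = ∑ v, p' v * ψ v := by
  simp only [Fintype.sum_prod_type_right, ← sum_mul, hq]

lemma entropy_fst (hq : ∀ u, ∑ v, q (u, v) = p u) (φ : A → B) :
    entropy q (fun w => φ w.1) = entropy p φ := by
  have hlaw : law q (fun w => φ w.1) = law p φ := by
    ext b
    simpa only [law, sum_filter, mul_boole] using
      sum_mul_fst hq fun u => if φ u = b then 1 else 0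
  rw [entropy, hlaw, entropy]

lemma entropy_snd (hq : ∀ v, ∑ u, q (u, v) = p' v) (φ : A' → B) :
    entropy q (fun w => φ w.2) = entropy p' φ := by
  have hlaw : law q (fun w => φ w.2) = law p' φ := by
    ext b
    simpa only [law, sum_filter, mul_boole] using
      sum_mul_snd hq fun v => if φ v = b then 1 else 0
  rw [entropy, hlaw, entropy]

end Marginals

section CondIndepCoupling

variable {E : Type*} [DecidableEq E]

noncomputable def condIndepCoupling (p : A → ℝ) (S : A → E) (w : A × A) : ℝ :=
  if S w.1 = S w.2 then p w.1 * p w.2 / law p S (S w.1) else 0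

variable {S : A → E}

lemma condIndepCoupling_nonneg (hp : ∀ a, 0 ≤ p a) (w : A × A) :
    0 ≤ condIndepCoupling p S w := by
  unfold condIndepCoupling
  split_ifs
  exacts [div_nonneg (mul_nonneg (hp _) (hp _)) (law_nonneg hp _ _), le_rfl]

lemma condIndepCoupling_swap (u v : A) :
    condIndepCoupling p S (v, u) = condIndepCoupling p S (u, v) := by
  unfold condIndepCoupling
  by_cases h : S u = S v
  · simp [h, mul_comm]
  · simp [h, Ne.symm h]

lemma condIndepCoupling_support {w : A × A} (hw : condIndepCoupling p S w ≠ 0) :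
    S w.1 = S w.2 := by
  by_contra h
  exact hw (if_neg h)

lemma sum_condIndepCoupling_left (hp : ∀ a, 0 ≤ p a) (u : A) :
    ∑ v, condIndepCoupling p S (u, v) = p u := by
  rcases (law_nonneg hp S (S u)).eq_or_lt with h0 | h0
  · have hu : p u = 0 := le_antisymm (h0 ▸ le_law hp S u) (hp u)
    simp [condIndepCoupling, ← h0, hu]
  calc ∑ v, condIndepCoupling p S (u, v) = p u * law p S (S u) / law p S (S u) := by
        simp only [condIndepCoupling, ← sum_filter, law, mul_sum, sum_div, eq_comm]
    _ = p u := mul_div_cancel_right₀ _ h0.ne'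

lemma sum_condIndepCoupling_right (hp : ∀ a, 0 ≤ p a) (v : A) :
    ∑ u, condIndepCoupling p S (u, v) = p v := by
  rw [← sum_condIndepCoupling_left (S := S) hp v]
  exact sum_congr rfl fun u _ => condIndepCoupling_swap v u

lemma entropy_condIndepCoupling [DecidableEq A] [Fintype E] (hp : ∀ a, 0 ≤ p a) :
    entropy (condIndepCoupling p S) (fun w => w) = 2 * entropy p (fun a => a) - entropy p S := by
  set q := condIndepCoupling p S
  have hpt : ∀ w, q w * -log (q w) =
      q w * -log (p w.1) + q w * -log (p w.2) - q w * -log (law p S (S w.1)) := by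
    intro w
    by_cases hw : q w = 0
    · simp [hw]
    have hq : q w = p w.1 * p w.2 / law p S (S w.1) := if_pos (condIndepCoupling_support hw)
    rw [hq] at hw ⊢
    simp only [div_eq_zero_iff, mul_eq_zero, not_or] at hw
    rw [log_div (mul_ne_zero hw.1.1 hw.1.2) hw.2, log_mul hw.1.1 hw.1.2]
    ring
  have hl : ∀ u, ∑ v, q (u, v) = p u := sum_condIndepCoupling_left hp
  have hr : ∀ v, ∑ u, q (u, v) = p v := sum_condIndepCoupling_right hp
  simp only [entropy_eq_sum_mul_neg_log, law_self, hpt]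
  rw [sum_sub_distrib, sum_add_distrib, sum_mul_fst hl fun a => -log (p a),
    sum_mul_snd hr fun a => -log (p a), sum_mul_fst hl fun a => -log (law p S (S a))]
  ring

end CondIndepCoupling

section SumCoupling

variable {G : Type*} [AddCommGroup G] [Fintype G]

/-- A joint law `q` of two copies `w = ((X₁, Y₁), (X₂, Y₂))` of a pair `(X, Y)` with law `p`,
supported on `X₁ + Y₁ = X₂ + Y₂`. -/
structure IsSumCoupling (p : G × G → ℝ) (q : (G × G) × (G × G) → ℝ) : Prop where
  nonneg : ∀ w, 0 ≤ q w
  sum_left : ∀ u, ∑ v, q (u, v) = p u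
  sum_right : ∀ v, ∑ u, q (u, v) = p v
  add_eq_add : ∀ w, q w ≠ 0 → w.1.1 + w.1.2 = w.2.1 + w.2.2

lemma IsSumCoupling.sum_eq_one {p : G × G → ℝ} {q : (G × G) × (G × G) → ℝ}
    (hq : IsSumCoupling p q) (hp1 : ∑ z, p z = 1) : ∑ w, q w = 1 := by
  rw [Fintype.sum_prod_type]
  simp only [hq.sum_left, hp1]

lemma IsSumCoupling.entropy_fst_snd_le {p : G × G → ℝ} {q : (G × G) × (G × G) → ℝ}
    (hq : IsSumCoupling p q) (hp1 : ∑ z, p z = 1) (φ : G × G → B) (ψ : G × G → C) :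
    entropy q (fun w => (φ w.1, ψ w.2)) ≤ entropy p φ + entropy p ψ := by
  rw [← entropy_fst hq.sum_left φ, ← entropy_snd hq.sum_right ψ]
  exact entropy_pair_le hq.nonneg (hq.sum_eq_one hp1) (fun w => φ w.1) (fun w => ψ w.2)

variable [DecidableEq G]

lemma isSumCoupling_condIndepCoupling {p : G × G → ℝ} (hp : ∀ z, 0 ≤ p z) :
    IsSumCoupling p (condIndepCoupling p fun z => z.1 + z.2) where
  nonneg := condIndepCoupling_nonneg hp
  sum_left := sum_condIndepCoupling_left hp
  sum_right := sum_condIndepCoupling_right hp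
  add_eq_add _ := condIndepCoupling_support

namespace IsSumCoupling

variable {p : G × G → ℝ} {q : (G × G) × (G × G) → ℝ} (hq : IsSumCoupling p q)
include hq

lemma entropy_add_entropy_X₁_sub_Y₂_le (hp1 : ∑ z, p z = 1) :
    entropy q (fun w => w) + entropy q (fun w => w.1.1 - w.2.2) ≤
      2 * entropy p (fun z => z.1) + 2 * entropy p (fun z => z.2) := by
  have hsub := entropy_submodular hq.nonneg
    (fun w => w.1.1) (fun w => w.1.2) (fun w => w.1.1 - w.2.2)
  have hK : entropy q (fun w => w) ≤ entropy q (fun w => (w.1.1, w.1.2, w.1.1 - w.2.2)) :=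
    entropy_le_of_comp hq.nonneg (fun t => ((t.1, t.2.1), (t.2.1 + t.2.2, t.1 - t.2.2)))
      fun w hw => Prod.ext rfl
        (Prod.ext (by dsimp only; linear_combination (norm := abel) -hq.add_eq_add w hw)
          (sub_sub_cancel _ _).symm)
  have hX : entropy q (fun w => (w.1.1, w.1.1 - w.2.2)) ≤
      entropy p (fun z => z.1) + entropy p (fun z => z.2) := calc
    _ ≤ entropy q (fun w => (w.1.1, w.2.2)) :=
      entropy_le_of_comp hq.nonneg (fun t => (t.1, t.1 - t.2)) fun _ _ => rfl
    _ ≤ _ := hq.entropy_fst_snd_le hp1 (fun z => z.1) (fun z => z.2)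
  have hY : entropy q (fun w => (w.1.2, w.1.1 - w.2.2)) ≤
      entropy p (fun z => z.2) + entropy p (fun z => z.1) := calc
    entropy q (fun w => (w.1.2, w.1.1 - w.2.2)) ≤ entropy q (fun w => (w.1.2, w.2.1)) :=
      entropy_le_of_comp hq.nonneg (fun t => (t.1, t.2 - t.1)) fun w hw =>
        Prod.ext rfl (by dsimp only; linear_combination (norm := abel) hq.add_eq_add w hw)
    _ ≤ _ := hq.entropy_fst_snd_le hp1 (fun z => z.2) (fun z => z.1)
  linarith

lemma entropy_add_entropy_X₁_sub_X₂_le (hp1 : ∑ z, p z = 1) :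
    entropy q (fun w => w) + entropy q (fun w => w.1.1 - w.2.1) ≤
      2 * entropy p (fun z => z.1) + 2 * entropy p (fun z => z.2) := by
  have hsub := entropy_submodular hq.nonneg
    (fun w => w.1.1) (fun w => w.1.2) (fun w => w.1.1 - w.2.1)
  have hK : entropy q (fun w => w) ≤ entropy q (fun w => (w.1.1, w.1.2, w.1.1 - w.2.1)) :=
    entropy_le_of_comp hq.nonneg (fun t => ((t.1, t.2.1), (t.1 - t.2.2, t.2.1 + t.2.2)))
      fun w hw => Prod.ext rfl
        (Prod.ext (sub_sub_cancel _ _).symm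
          (by dsimp only; linear_combination (norm := abel) -hq.add_eq_add w hw))
  have hX : entropy q (fun w => (w.1.1, w.1.1 - w.2.1)) ≤
      entropy p (fun z => z.1) + entropy p (fun z => z.1) := calc
    _ ≤ entropy q (fun w => (w.1.1, w.2.1)) :=
      entropy_le_of_comp hq.nonneg (fun t => (t.1, t.1 - t.2)) fun _ _ => rfl
    _ ≤ _ := hq.entropy_fst_snd_le hp1 (fun z => z.1) (fun z => z.1)
  have hY : entropy q (fun w => (w.1.2, w.1.1 - w.2.1)) ≤
      entropy p (fun z => z.2) + entropy p (fun z => z.2) := calc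
    entropy q (fun w => (w.1.2, w.1.1 - w.2.1)) ≤ entropy q (fun w => (w.1.2, w.2.2)) :=
      entropy_le_of_comp hq.nonneg (fun t => (t.1, t.2 - t.1)) fun w hw =>
        Prod.ext rfl (by dsimp only; linear_combination (norm := abel) hq.add_eq_add w hw)
    _ ≤ _ := hq.entropy_fst_snd_le hp1 (fun z => z.2) (fun z => z.2)
  linarith

lemma entropy_add_entropy_X_sub_Y_le (hp1 : ∑ z, p z = 1) :
    entropy q (fun w => w) + entropy p (fun z => z.1 - z.2) ≤
      entropy p (fun z => z) + entropy q (fun w => w.1.1 - w.2.2) +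
        entropy q (fun w => w.1.1 - w.2.1) := by
  have hsub := entropy_submodular hq.nonneg
    (fun w => w.1.1) (fun w => w.1.1 - w.2.2) (fun w => w.1.1 - w.1.2)
  have hK : entropy q (fun w => w) ≤
      entropy q (fun w => (w.1.1, w.1.1 - w.2.2, w.1.1 - w.1.2)) :=
    entropy_le_of_comp hq.nonneg
      (fun t => ((t.1, t.1 - t.2.2), (t.1 - t.2.2 + t.2.1, t.1 - t.2.1)))
      fun w hw => Prod.ext (Prod.ext rfl (sub_sub_cancel _ _).symm)
        (Prod.ext (by dsimp only; linear_combination (norm := abel) -hq.add_eq_add w hw)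
          (sub_sub_cancel _ _).symm)
  have hD : entropy q (fun w => w.1.1 - w.1.2) = entropy p (fun z => z.1 - z.2) :=
    entropy_fst hq.sum_left (fun z => z.1 - z.2)
  have hXD : entropy q (fun w => (w.1.1, w.1.1 - w.1.2)) ≤ entropy p (fun z => z) := calc
    _ ≤ entropy q (fun w => w.1) :=
      entropy_le_of_comp hq.nonneg (fun t => (t.1, t.1 - t.2)) fun _ _ => rfl
    _ = _ := entropy_fst hq.sum_left (fun z => z)
  have hWD : entropy q (fun w => (w.1.1 - w.2.2, w.1.1 - w.1.2)) ≤
      entropy q (fun w => w.1.1 - w.2.2) + entropy q (fun w => w.1.1 - w.2.1) := calc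
    entropy q (fun w => (w.1.1 - w.2.2, w.1.1 - w.1.2)) ≤
        entropy q (fun w => (w.1.1 - w.2.2, w.1.1 - w.2.1)) :=
      entropy_le_of_comp hq.nonneg (fun t => (t.1, t.1 + t.2)) fun w hw =>
        Prod.ext rfl (by dsimp only; linear_combination (norm := abel) -hq.add_eq_add w hw)
    _ ≤ _ := entropy_pair_le hq.nonneg (hq.sum_eq_one hp1) _ _
  linarith

end IsSumCoupling

theorem entropy_sub_le {p : G × G → ℝ} (hp : ∀ z, 0 ≤ p z) (hp1 : ∑ z, p z = 1) :
    entropy p (fun z => z.1 - z.2) ≤ 2 / 3 * entropy p (fun z => z.1) +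
      2 / 3 * entropy p (fun z => z.2) + 1 / 2 * entropy p (fun z => z.1 + z.2) := by
  have hq := isSumCoupling_condIndepCoupling hp
  have hK := entropy_condIndepCoupling (S := fun z : G × G => z.1 + z.2) hp
  have hA := hq.entropy_add_entropy_X₁_sub_Y₂_le hp1
  have hB := hq.entropy_add_entropy_X₁_sub_X₂_le hp1
  have hC := hq.entropy_add_entropy_X_sub_Y_le hp1
  have hD : entropy p (fun z => z.1 - z.2) ≤ entropy p (fun z => z) :=
    entropy_le_of_comp hp (fun z => z.1 - z.2) fun _ _ => rfl
  linarith

end SumCoupling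

section Bridge

variable {Ω : Type*} [MeasurableSpace Ω] (μ : Measure Ω) [MeasurableSpace A]
  [MeasurableSingletonClass A] {Z : Ω → A}

noncomputable def pmfOf (Z : Ω → A) (a : A) : ℝ := (μ (Z ⁻¹' {a})).toReal

lemma ent_comp_eq_entropy [IsFiniteMeasure μ] (hZ : Measurable Z) (g : A → B) :
    ent μ (fun ω => g (Z ω)) = entropy (pmfOf μ Z) g := by
  refine sum_congr rfl fun b _ => congrArg negMulLog ?_
  simp only [law, pmfOf]
  rw [← ENNReal.toReal_sum fun _ _ => measure_ne_top _ _,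
    sum_measure_preimage_singleton _ fun a _ => hZ (measurableSet_singleton a)]
  congr 2
  ext ω
  simp

lemma sum_pmfOf [IsProbabilityMeasure μ] (hZ : Measurable Z) : ∑ a, pmfOf μ Z a = 1 := by
  simp only [pmfOf]
  rw [← ENNReal.toReal_sum fun _ _ => measure_ne_top _ _,
    sum_measure_preimage_singleton _ fun a _ => hZ (measurableSet_singleton a)]
  simp

end Bridge

end DiscreteEntropy

open DiscreteEntropy

theorem stmt8 {Ω G : Type*} [MeasurableSpace Ω] [AddCommGroup G] [Fintype G]
    [MeasurableSpace G] [MeasurableSingletonClass G]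
    (μ : Measure Ω) [IsProbabilityMeasure μ]
    (X Y : Ω → G) (hX : Measurable X) (hY : Measurable Y) :
    ent μ (fun ω => X ω - Y ω) ≤
      (2/3) * ent μ X + (2/3) * ent μ Y + (1/2) * ent μ (fun ω => X ω + Y ω) := by
  classical
  have hZ : Measurable fun ω => (X ω, Y ω) := hX.prodMk hY
  have h := entropy_sub_le (p := pmfOf μ fun ω => (X ω, Y ω))
    (fun _ => ENNReal.toReal_nonneg) (sum_pmfOf μ hZ)
  simpa only [← ent_comp_eq_entropy μ hZ] using h
end

section
/- Suppose X and Y are random variables with finite support on an abelian group G. Then 5 H(X,Y) − 4 H(X) − 4 H(Y) − 3 H(X+Y) + H(X−Y) ≤ 0. -/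
open MeasureTheory ProbabilityTheory Real

namespace Stmt9Aux

open Finset
open scoped Classical

variable {A : Type*} [Fintype A]

noncomputable def pushw {S : Type*} [Fintype S] (w : A → ℝ) (f : A → S) (s : S) : ℝ :=
  ∑ a, if f a = s then w a else 0

noncomputable def entw {S : Type*} [Fintype S] (w : A → ℝ) (f : A → S) : ℝ :=
  ∑ s, Real.negMulLog (pushw w f s)

lemma pushw_nonneg {S : Type*} [Fintype S] {w : A → ℝ} (hw : ∀ a, 0 ≤ w a) (f : A → S) (s : S) :
    0 ≤ pushw w f s :=
  Finset.sum_nonneg fun a _ => by split_ifs; exacts [hw a, le_refl 0]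

lemma sum_pushw {S : Type*} [Fintype S] (w : A → ℝ) (f : A → S) :
    ∑ s, pushw w f s = ∑ a, w a := by
  unfold pushw
  rw [Finset.sum_comm]
  exact Finset.sum_congr rfl fun a _ => by simp

lemma pushw_comp {S S' : Type*} [Fintype S] [Fintype S'] (w : A → ℝ) (F : A → S) (φ : S → S')
    (s' : S') :
    pushw w (fun a => φ (F a)) s' = pushw (pushw w F) φ s' := by
  unfold pushw
  have h1 : ∀ s : S, (if φ s = s' then ∑ a, (if F a = s then w a else 0) else 0)
      = ∑ a, if φ s = s' then (if F a = s then w a else 0) else 0 := by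
    intro s; split_ifs <;> simp
  simp_rw [h1]
  rw [Finset.sum_comm]
  refine Finset.sum_congr rfl fun a _ => ?_
  rw [Finset.sum_eq_single (F a)]
  · simp
  · intro s _ hs
    have : F a ≠ s := fun h => hs h.symm
    simp [this]
  · simp

lemma entw_comp {S S' : Type*} [Fintype S] [Fintype S'] (w : A → ℝ) (F : A → S) (φ : S → S') :
    entw w (fun a => φ (F a)) = entw (pushw w F) φ :=
  Finset.sum_congr rfl fun s' _ => by rw [pushw_comp]

lemma entw_comp_inj {S S' : Type*} [Fintype S] [Fintype S'] (w : A → ℝ) (f : A → S) (e : S → S')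
    (he : Function.Injective e) :
    entw w (fun a => e (f a)) = entw w f := by
  unfold entw
  have h0 : ∀ s' ∈ Finset.univ, s' ∉ Finset.univ.image e →
      Real.negMulLog (pushw w (fun a => e (f a)) s') = 0 := by
    intro s' _ hs'
    have hz : pushw w (fun a => e (f a)) s' = 0 := Finset.sum_eq_zero fun a _ => by
      rw [if_neg]
      intro h; exact hs' (Finset.mem_image.2 ⟨f a, Finset.mem_univ _, h⟩)
    rw [hz, Real.negMulLog_zero]
  calc ∑ s', Real.negMulLog (pushw w (fun a => e (f a)) s')
      = ∑ s' ∈ Finset.univ.image e, Real.negMulLog (pushw w (fun a => e (f a)) s') :=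
        (Finset.sum_subset (Finset.subset_univ _) h0).symm
    _ = ∑ s, Real.negMulLog (pushw w (fun a => e (f a)) (e s)) :=
        Finset.sum_image (fun a _ b _ h => he h)
    _ = ∑ s, Real.negMulLog (pushw w f s) := by
        refine Finset.sum_congr rfl fun s _ => ?_
        congr 1
        unfold pushw
        exact Finset.sum_congr rfl fun a _ => by simp [he.eq_iff]


lemma key_ineq {q a b c : ℝ} (hq : 0 ≤ q) (hqa : q ≤ a) (hqb : q ≤ b)
    (hac : a ≤ c) (hbc : b ≤ c) :
    q - (if 0 < c then a * b / c else 0)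
      ≤ -(q * Real.log a) - q * Real.log b + q * Real.log q + q * Real.log c := by
  rcases eq_or_lt_of_le hq with hq0 | hqpos
  · have hb0 : 0 ≤ b := le_trans hq hqb
    have ha0 : 0 ≤ a := le_trans hq hqa
    have hif : (0:ℝ) ≤ (if 0 < c then a * b / c else 0) := by
      split_ifs with h
      · exact div_nonneg (mul_nonneg ha0 hb0) h.le
      · exact le_refl 0
    rw [← hq0]
    linarith [hif]
  · have ha : 0 < a := lt_of_lt_of_le hqpos hqa
    have hb : 0 < b := lt_of_lt_of_le hqpos hqb
    have hc : 0 < c := lt_of_lt_of_le ha hac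
    rw [if_pos hc]
    have hlog : Real.log (a * b / (q * c)) ≤ a * b / (q * c) - 1 :=
      Real.log_le_sub_one_of_pos (by positivity)
    have hexp : Real.log (a * b / (q * c))
        = Real.log a + Real.log b - Real.log q - Real.log c := by
      rw [Real.log_div (by positivity) (by positivity), Real.log_mul ha.ne' hb.ne',
        Real.log_mul hqpos.ne' hc.ne']
      ring
    have h2 := mul_le_mul_of_nonneg_left hlog hq
    have h3 : q * (a * b / (q * c) - 1) = a * b / c - q := by
      field_simp
    rw [hexp, h3] at h2
    ring_nf at h2 ⊢
    linarith

section rot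
variable {S T U M : Type*} [Fintype S] [Fintype T] [Fintype U] [AddCommMonoid M]

lemma sum3_rot_left (f : S → T → U → M) :
    ∑ t, ∑ u, ∑ s, f s t u = ∑ s, ∑ t, ∑ u, f s t u :=
  calc ∑ t, ∑ u, ∑ s, f s t u
      = ∑ t, ∑ s, ∑ u, f s t u := Finset.sum_congr rfl fun t _ => Finset.sum_comm
    _ = ∑ s, ∑ t, ∑ u, f s t u := Finset.sum_comm

lemma sum3_rot_right (f : S → T → U → M) :
    ∑ u, ∑ s, ∑ t, f s t u = ∑ s, ∑ t, ∑ u, f s t u :=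
  calc ∑ u, ∑ s, ∑ t, f s t u
      = ∑ s, ∑ u, ∑ t, f s t u := Finset.sum_comm
    _ = ∑ s, ∑ t, ∑ u, f s t u := Finset.sum_congr rfl fun s _ => Finset.sum_comm

end rot

lemma submod_core {S T U : Type*} [Fintype S] [Fintype T] [Fintype U]
    (Q : S → T → U → ℝ) (hQ : ∀ s t u, 0 ≤ Q s t u) :
    (∑ s, ∑ t, ∑ u, negMulLog (Q s t u)) + ∑ u, negMulLog (∑ s, ∑ t, Q s t u)
      ≤ (∑ s, ∑ u, negMulLog (∑ t, Q s t u)) + ∑ t, ∑ u, negMulLog (∑ s, Q s t u) := by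
  classical
  set A : S → U → ℝ := fun s u => ∑ t, Q s t u with hA
  set B : T → U → ℝ := fun t u => ∑ s, Q s t u with hB
  set C : U → ℝ := fun u => ∑ s, ∑ t, Q s t u with hC
  have hA' : ∀ s u, A s u = ∑ t, Q s t u := fun _ _ => rfl
  have hB' : ∀ t u, B t u = ∑ s, Q s t u := fun _ _ => rfl
  have hC' : ∀ u, C u = ∑ s, ∑ t, Q s t u := fun _ => rfl
  have hML : ∀ x : ℝ, negMulLog x = -(x * Real.log x) := fun x => by
    rw [negMulLog_eq_neg]
  have hA0 : ∀ s u, 0 ≤ A s u := fun s u => Finset.sum_nonneg fun t _ => hQ s t u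
  have hB0 : ∀ t u, 0 ≤ B t u := fun t u => Finset.sum_nonneg fun s _ => hQ s t u
  have hC0 : ∀ u, 0 ≤ C u := fun u => Finset.sum_nonneg fun s _ =>
    Finset.sum_nonneg fun t _ => hQ s t u
  have hQA : ∀ s t u, Q s t u ≤ A s u := fun s t u =>
    Finset.single_le_sum (fun t' _ => hQ s t' u) (Finset.mem_univ t)
  have hQB : ∀ s t u, Q s t u ≤ B t u := fun s t u =>
    Finset.single_le_sum (fun s' _ => hQ s' t u) (Finset.mem_univ s)
  have hAC : ∀ s u, A s u ≤ C u := fun s u =>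
    Finset.single_le_sum (fun s' _ => Finset.sum_nonneg fun t _ => hQ s' t u) (Finset.mem_univ s)
  have hsumB : ∀ u, ∑ t, B t u = C u := fun u => Finset.sum_comm
  have hsumA : ∀ u, ∑ s, A s u = C u := fun _ => rfl
  have hBC : ∀ t u, B t u ≤ C u := fun t u => by
    rw [← hsumB u]
    exact Finset.single_le_sum (fun t' _ => hB0 t' u) (Finset.mem_univ t)
  -- pointwise expansions
  have pA : ∀ s u, negMulLog (A s u) = ∑ t, -(Q s t u * Real.log (A s u)) := by
    intro s u
    simp only [hML, Finset.sum_neg_distrib]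
    rw [hA', Finset.sum_mul]
  have pB : ∀ t u, negMulLog (B t u) = ∑ s, -(Q s t u * Real.log (B t u)) := by
    intro t u
    simp only [hML, Finset.sum_neg_distrib]
    rw [hB', Finset.sum_mul]
  have pC : ∀ u, negMulLog (C u) = ∑ s, ∑ t, -(Q s t u * Real.log (C u)) := by
    intro u
    simp only [hML, Finset.sum_neg_distrib]
    rw [hC']
    simp only [Finset.sum_mul]
  have e1 : ∑ s, ∑ u, negMulLog (A s u)
      = ∑ s, ∑ t, ∑ u, -(Q s t u * Real.log (A s u)) := by
    refine Finset.sum_congr rfl fun s _ => ?_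
    calc ∑ u, negMulLog (A s u) = ∑ u, ∑ t, -(Q s t u * Real.log (A s u)) :=
          Finset.sum_congr rfl fun u _ => pA s u
      _ = ∑ t, ∑ u, -(Q s t u * Real.log (A s u)) := Finset.sum_comm
  have e2 : ∑ t, ∑ u, negMulLog (B t u)
      = ∑ s, ∑ t, ∑ u, -(Q s t u * Real.log (B t u)) := by
    rw [← sum3_rot_left (fun s t u => -(Q s t u * Real.log (B t u)))]
    exact Finset.sum_congr rfl fun t _ => Finset.sum_congr rfl fun u _ => pB t u
  have e4 : ∑ u, negMulLog (C u)
      = ∑ s, ∑ t, ∑ u, -(Q s t u * Real.log (C u)) := by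
    rw [← sum3_rot_right (fun s t u => -(Q s t u * Real.log (C u)))]
    exact Finset.sum_congr rfl fun u _ => pC u
  have e3 : ∑ s, ∑ t, ∑ u, negMulLog (Q s t u)
      = ∑ s, ∑ t, ∑ u, -(Q s t u * Real.log (Q s t u)) :=
    Finset.sum_congr rfl fun s _ => Finset.sum_congr rfl fun t _ =>
      Finset.sum_congr rfl fun u _ => hML _
  have expand : (∑ s, ∑ u, negMulLog (A s u)) + (∑ t, ∑ u, negMulLog (B t u))
      - ((∑ s, ∑ t, ∑ u, negMulLog (Q s t u)) + ∑ u, negMulLog (C u))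
      = ∑ s, ∑ t, ∑ u, (-(Q s t u * Real.log (A s u)) - Q s t u * Real.log (B t u)
          + Q s t u * Real.log (Q s t u) + Q s t u * Real.log (C u)) := by
    rw [e1, e2, e3, e4]
    simp only [← Finset.sum_add_distrib, ← Finset.sum_sub_distrib]
    refine Finset.sum_congr rfl fun s _ => Finset.sum_congr rfl fun t _ =>
      Finset.sum_congr rfl fun u _ => by ring
  have lower : ∀ s t u, Q s t u - (if 0 < C u then A s u * B t u / C u else 0)
      ≤ -(Q s t u * Real.log (A s u)) - Q s t u * Real.log (B t u)
        + Q s t u * Real.log (Q s t u) + Q s t u * Real.log (C u) :=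
    fun s t u => key_ineq (hQ s t u) (hQA s t u) (hQB s t u) (hAC s u) (hBC t u)
  have sumineq : (∑ s, ∑ t, ∑ u, Q s t u)
      - (∑ s, ∑ t, ∑ u, (if 0 < C u then A s u * B t u / C u else 0))
      ≤ ∑ s, ∑ t, ∑ u, (-(Q s t u * Real.log (A s u)) - Q s t u * Real.log (B t u)
          + Q s t u * Real.log (Q s t u) + Q s t u * Real.log (C u)) := by
    rw [← Finset.sum_sub_distrib]
    refine Finset.sum_le_sum fun s _ => ?_
    rw [← Finset.sum_sub_distrib]
    refine Finset.sum_le_sum fun t _ => ?_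
    rw [← Finset.sum_sub_distrib]
    exact Finset.sum_le_sum fun u _ => lower s t u
  have hcollapse : ∀ u, ∑ s, ∑ t, (if 0 < C u then A s u * B t u / C u else 0)
      = if 0 < C u then C u else 0 := by
    intro u
    split_ifs with h
    · have h1 : ∀ s, ∑ t, A s u * B t u / C u = A s u * (C u / C u) := by
        intro s
        rw [← hsumB u, ← Finset.sum_div, ← Finset.mul_sum]
        rw [mul_div_assoc]
      simp only [h1]
      rw [← Finset.sum_mul, hsumA u, div_self (ne_of_gt h), mul_one]
    · simp
  have hifsum : (∑ s, ∑ t, ∑ u, (if 0 < C u then A s u * B t u / C u else 0))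
      ≤ ∑ s, ∑ t, ∑ u, Q s t u := by
    rw [← sum3_rot_right (fun s t u => (if 0 < C u then A s u * B t u / C u else 0))]
    have : ∑ u, ∑ s, ∑ t, (if 0 < C u then A s u * B t u / C u else 0)
        ≤ ∑ u, C u := by
      refine Finset.sum_le_sum fun u _ => ?_
      rw [hcollapse u]
      split_ifs with h
      · exact le_refl _
      · exact hC0 u
    exact le_trans this (le_of_eq (by rw [← sum3_rot_right (fun s t u => Q s t u)]))
  linarith [expand, sumineq, hifsum]


lemma sum_ite_const {I M : Type*} [Fintype I] [AddCommMonoid M] (c : Prop) [Decidable c]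
    (f : I → M) :
    ∑ i, (if c then f i else 0) = if c then ∑ i, f i else 0 := by
  split_ifs <;> simp

lemma submod {S T U : Type*} [Fintype S] [Fintype T] [Fintype U]
    (w : A → ℝ) (hw : ∀ a, 0 ≤ w a) (f : A → S) (g : A → T) (h : A → U) :
    entw w (fun a => (f a, (g a, h a))) + entw w h
      ≤ entw w (fun a => (f a, h a)) + entw w (fun a => (g a, h a)) := by
  set Q : S → T → U → ℝ := fun s t u => pushw w (fun a => (f a, (g a, h a))) (s, (t, u)) with hQdef
  have hQ : ∀ s t u, 0 ≤ Q s t u := fun s t u => pushw_nonneg hw _ _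
  have hfh : ∀ s u, pushw w (fun a => (f a, h a)) (s, u) = ∑ t, Q s t u := by
    intro s u
    simp only [hQdef]
    unfold pushw
    rw [Finset.sum_comm]
    refine Finset.sum_congr rfl fun a _ => ?_
    by_cases h1 : f a = s <;> by_cases h2 : h a = u <;>
      simp [Prod.ext_iff, h1, h2]
  have hgh : ∀ t u, pushw w (fun a => (g a, h a)) (t, u) = ∑ s, Q s t u := by
    intro t u
    simp only [hQdef]
    unfold pushw
    rw [Finset.sum_comm]
    refine Finset.sum_congr rfl fun a _ => ?_
    by_cases h1 : g a = t <;> by_cases h2 : h a = u <;>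
      simp [Prod.ext_iff, h1, h2]
  have hh : ∀ u, pushw w h u = ∑ s, ∑ t, Q s t u := by
    intro u
    simp only [hQdef]
    unfold pushw
    conv_rhs => enter [2, s]; rw [Finset.sum_comm]
    conv_rhs => rw [Finset.sum_comm]
    refine Finset.sum_congr rfl fun a _ => ?_
    by_cases h2 : h a = u <;>
      simp [Prod.ext_iff, h2, ite_and, sum_ite_const]
  have core := submod_core Q hQ
  have E1 : entw w (fun a => (f a, (g a, h a))) = ∑ s, ∑ t, ∑ u, negMulLog (Q s t u) := by
    unfold entw
    rw [Fintype.sum_prod_type]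
    refine Finset.sum_congr rfl fun s _ => ?_
    rw [Fintype.sum_prod_type]
  have E2 : entw w h = ∑ u, negMulLog (∑ s, ∑ t, Q s t u) := by
    unfold entw
    exact Finset.sum_congr rfl fun u _ => by rw [hh u]
  have E3 : entw w (fun a => (f a, h a)) = ∑ s, ∑ u, negMulLog (∑ t, Q s t u) := by
    unfold entw
    rw [Fintype.sum_prod_type]
    exact Finset.sum_congr rfl fun s _ => Finset.sum_congr rfl fun u _ => by rw [hfh s u]
  have E4 : entw w (fun a => (g a, h a)) = ∑ t, ∑ u, negMulLog (∑ s, Q s t u) := by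
    unfold entw
    rw [Fintype.sum_prod_type]
    exact Finset.sum_congr rfl fun t _ => Finset.sum_congr rfl fun u _ => by rw [hgh t u]
  rw [E1, E2, E3, E4]
  exact core

lemma entw_unit (w : A → ℝ) (hw1 : ∑ a, w a = 1) :
    entw w (fun _ => ()) = 0 := by
  unfold entw pushw
  simp [hw1]

lemma entw_pair_le {S T : Type*} [Fintype S] [Fintype T] (w : A → ℝ)
    (hw : ∀ a, 0 ≤ w a) (hw1 : ∑ a, w a = 1) (f : A → S) (g : A → T) :
    entw w (fun a => (f a, g a)) ≤ entw w f + entw w g := by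
  have h := submod w hw f g (fun _ => ())
  have h1 : entw w (fun a => (f a, ())) = entw w f :=
    entw_comp_inj w f (fun s => (s, ())) (fun a b hab => congrArg Prod.fst hab)
  have h2 : entw w (fun a => (g a, ())) = entw w g :=
    entw_comp_inj w g (fun s => (s, ())) (fun a b hab => congrArg Prod.fst hab)
  have h3 : entw w (fun a => (f a, (g a, ()))) = entw w (fun a => (f a, g a)) :=
    entw_comp_inj w (fun a => (f a, g a)) (fun y => (y.1, (y.2, ())))
      (fun a b hab => by
        have h1 := congrArg Prod.fst hab
        have h2 := congrArg (fun p => p.2.1) hab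
        exact Prod.ext h1 h2)
  have h4 := entw_unit w hw1
  rw [h1, h2, h3, h4] at h
  linarith


lemma pushw_id {S : Type*} [Fintype S] (v : S → ℝ) (s : S) : pushw v (fun x => x) s = v s := by
  unfold pushw
  simp

lemma negMulLog_mul_div {x y z : ℝ} (hx : 0 ≤ x) (hy : 0 ≤ y) (hz : z = 0 → x = 0) :
    negMulLog (x * y / z) = (x * y / z) * (-Real.log x) + (x * y / z) * (-Real.log y)
      + (x * y / z) * Real.log z := by
  rcases eq_or_ne x 0 with h | hx0
  · simp [h]
  rcases eq_or_ne y 0 with h | hy0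
  · simp [h]
  have hz0 : z ≠ 0 := fun h0 => hx0 (hz h0)
  rw [negMulLog, Real.log_div (mul_ne_zero hx0 hy0) hz0, Real.log_mul hx0 hy0]
  ring

section conc
variable {G : Type*} [Fintype G]

noncomputable def pX (p : G × G → ℝ) (a : G) : ℝ := ∑ b, p (a, b)

noncomputable def w3 (p : G × G → ℝ) : G × G × G → ℝ :=
  fun z => p (z.1, z.2.1) * p (z.1, z.2.2) / pX p z.1

variable {p : G × G → ℝ}

lemma p_le_pX (hp : ∀ z, 0 ≤ p z) (a b : G) : p (a, b) ≤ pX p a :=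
  Finset.single_le_sum (fun b' _ => hp (a, b')) (Finset.mem_univ b)

lemma pX_nonneg (hp : ∀ z, 0 ≤ p z) (a : G) : 0 ≤ pX p a :=
  Finset.sum_nonneg fun b _ => hp (a, b)

lemma p_eq_zero (hp : ∀ z, 0 ≤ p z) {a : G} (h : pX p a = 0) (b : G) : p (a, b) = 0 :=
  (Finset.sum_eq_zero_iff_of_nonneg (fun b' _ => hp (a, b'))).1 h b (Finset.mem_univ b)

lemma w3_nonneg (hp : ∀ z, 0 ≤ p z) (z : G × G × G) : 0 ≤ w3 p z :=
  div_nonneg (mul_nonneg (hp _) (hp _)) (pX_nonneg hp _)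

lemma sum_fiber_c (hp : ∀ z, 0 ≤ p z) (a b : G) : ∑ c, w3 p (a, b, c) = p (a, b) := by
  unfold w3
  simp only
  rw [← Finset.sum_div, ← Finset.mul_sum]
  by_cases h : pX p a = 0
  · rw [p_eq_zero hp h b]
    simp
  · rw [show (∑ c, p (a, c)) = pX p a from rfl, mul_div_assoc, div_self h, mul_one]

lemma sum_fiber_b (hp : ∀ z, 0 ≤ p z) (a c : G) : ∑ b, w3 p (a, b, c) = p (a, c) := by
  unfold w3
  simp only
  rw [← Finset.sum_div, ← Finset.sum_mul]
  by_cases h : pX p a = 0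
  · rw [p_eq_zero hp h c]
    simp
  · rw [show (∑ b, p (a, b)) = pX p a from rfl, mul_comm, mul_div_assoc, div_self h, mul_one]

lemma sum_fiber_bc (hp : ∀ z, 0 ≤ p z) (a : G) : ∑ y : G × G, w3 p (a, y) = pX p a := by
  rw [Fintype.sum_prod_type]
  calc ∑ b, ∑ c, w3 p (a, b, c) = ∑ b, p (a, b) :=
        Finset.sum_congr rfl fun b _ => sum_fiber_c hp a b
    _ = pX p a := rfl

lemma pushw_w3_12 (hp : ∀ z, 0 ≤ p z) :
    pushw (w3 p) (fun z => (z.1, z.2.1)) = p := by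
  funext y
  obtain ⟨a, b⟩ := y
  unfold pushw
  rw [Fintype.sum_prod_type]
  conv_lhs => enter [2, a']; rw [Fintype.sum_prod_type]
  simp only [sum_ite_const, sum_fiber_c hp]
  simp only [Prod.ext_iff, ite_and]
  simp [sum_ite_const]
  exact sum_fiber_c hp a b

lemma pushw_w3_13 (hp : ∀ z, 0 ≤ p z) :
    pushw (w3 p) (fun z => (z.1, z.2.2)) = p := by
  funext y
  obtain ⟨a, c⟩ := y
  unfold pushw
  rw [Fintype.sum_prod_type]
  conv_lhs => enter [2, a']; rw [Fintype.sum_prod_type, Finset.sum_comm]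
  simp only [sum_ite_const, sum_fiber_b hp]
  simp only [Prod.ext_iff, ite_and]
  simp [sum_ite_const]
  exact sum_fiber_b hp a c

lemma sum_w3 (hp : ∀ z, 0 ≤ p z) : ∑ z, w3 p z = ∑ y, p y := by
  rw [Fintype.sum_prod_type]
  calc ∑ a, ∑ y : G × G, w3 p (a, y) = ∑ a, pX p a :=
        Finset.sum_congr rfl fun a _ => sum_fiber_bc hp a
    _ = ∑ y, p y := by
        rw [Fintype.sum_prod_type]
        exact Finset.sum_congr rfl fun a _ => rfl

lemma pushw_fst (a : G) : pushw p Prod.fst a = pX p a := by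
  have h1 : ∀ x : G, (∑ x1 : G, if x = a then p (x, x1) else 0)
      = if x = a then pX p x else 0 := by
    intro x
    rw [sum_ite_const]
    split_ifs <;> rfl
  unfold pushw
  rw [Fintype.sum_prod_type]
  refine Eq.trans (Finset.sum_congr rfl fun x _ => h1 x) ?_
  simp [pX]

lemma w3_ent (hp : ∀ z, 0 ≤ p z) :
    ∑ z, negMulLog (w3 p z)
      = 2 * (∑ y, negMulLog (p y)) - ∑ a, negMulLog (pX p a) := by
  have point : ∀ a b c : G, negMulLog (w3 p (a, b, c))
      = w3 p (a, b, c) * (-Real.log (p (a, b))) + w3 p (a, b, c) * (-Real.log (p (a, c)))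
        + w3 p (a, b, c) * Real.log (pX p a) :=
    fun a b c => negMulLog_mul_div (hp (a, b)) (hp (a, c)) (fun h0 => p_eq_zero hp h0 b)
  have T1 : ∑ a, ∑ b, ∑ c, w3 p (a, b, c) * (-Real.log (p (a, b))) = ∑ y, negMulLog (p y) := by
    rw [Fintype.sum_prod_type]
    refine Finset.sum_congr rfl fun a _ => Finset.sum_congr rfl fun b _ => ?_
    rw [← Finset.sum_mul, sum_fiber_c hp a b, negMulLog]
    ring
  have T2 : ∑ a, ∑ b, ∑ c, w3 p (a, b, c) * (-Real.log (p (a, c))) = ∑ y, negMulLog (p y) := by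
    rw [Fintype.sum_prod_type]
    refine Finset.sum_congr rfl fun a _ => ?_
    rw [Finset.sum_comm]
    refine Finset.sum_congr rfl fun c _ => ?_
    rw [← Finset.sum_mul, sum_fiber_b hp a c, negMulLog]
    ring
  have T3 : ∑ a, ∑ b, ∑ c, w3 p (a, b, c) * Real.log (pX p a) = ∑ a, -negMulLog (pX p a) := by
    refine Finset.sum_congr rfl fun a _ => ?_
    have hbc : ∑ b, ∑ c, w3 p (a, b, c) = pX p a :=
      (Finset.sum_congr rfl fun b _ => sum_fiber_c hp a b).trans rfl
    calc ∑ b, ∑ c, w3 p (a, b, c) * Real.log (pX p a)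
        = ∑ b, (∑ c, w3 p (a, b, c)) * Real.log (pX p a) :=
          Finset.sum_congr rfl fun b _ => (Finset.sum_mul _ _ _).symm
      _ = (∑ b, ∑ c, w3 p (a, b, c)) * Real.log (pX p a) := (Finset.sum_mul _ _ _).symm
      _ = -negMulLog (pX p a) := by rw [hbc, negMulLog]; ring
  calc ∑ z, negMulLog (w3 p z)
      = ∑ a, ∑ y : G × G, negMulLog (w3 p (a, y)) := Fintype.sum_prod_type _
    _ = ∑ a, ∑ b, ∑ c, negMulLog (w3 p (a, b, c)) :=
        Finset.sum_congr rfl fun a _ => Fintype.sum_prod_type _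
    _ = ∑ a, ∑ b, ∑ c, (w3 p (a, b, c) * (-Real.log (p (a, b)))
        + w3 p (a, b, c) * (-Real.log (p (a, c))) + w3 p (a, b, c) * Real.log (pX p a)) :=
        Finset.sum_congr rfl fun a _ => Finset.sum_congr rfl fun b _ =>
          Finset.sum_congr rfl fun c _ => point a b c
    _ = (∑ a, ∑ b, ∑ c, w3 p (a, b, c) * (-Real.log (p (a, b))))
        + (∑ a, ∑ b, ∑ c, w3 p (a, b, c) * (-Real.log (p (a, c))))
        + ∑ a, ∑ b, ∑ c, w3 p (a, b, c) * Real.log (pX p a) := by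
        simp only [← Finset.sum_add_distrib]
    _ = 2 * (∑ y, negMulLog (p y)) - ∑ a, negMulLog (pX p a) := by
        rw [T1, T2, T3, Finset.sum_neg_distrib]
        ring

lemma entw_w3_12e (hp : ∀ z, 0 ≤ p z) {S : Type*} [Fintype S] (φ : G × G → S) :
    entw (w3 p) (fun z => φ (z.1, z.2.1)) = entw p φ := by
  have h1 := entw_comp (w3 p) (fun z : G × G × G => (z.1, z.2.1)) φ
  have h2 : entw (pushw (w3 p) fun z : G × G × G => (z.1, z.2.1)) φ = entw p φ := by
    rw [pushw_w3_12 hp]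
  exact h1.trans h2

lemma entw_w3_13e (hp : ∀ z, 0 ≤ p z) {S : Type*} [Fintype S] (φ : G × G → S) :
    entw (w3 p) (fun z => φ (z.1, z.2.2)) = entw p φ := by
  have h1 := entw_comp (w3 p) (fun z : G × G × G => (z.1, z.2.2)) φ
  have h2 : entw (pushw (w3 p) fun z : G × G × G => (z.1, z.2.2)) φ = entw p φ := by
    rw [pushw_w3_13 hp]
  exact h1.trans h2

lemma entw_w3_id (hp : ∀ z, 0 ≤ p z) :
    entw (w3 p) (fun z => z) = 2 * entw p (fun y => y) - entw p Prod.fst := by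
  have e1 : entw p (fun y : G × G => y) = ∑ y, negMulLog (p y) := by
    unfold entw
    exact Finset.sum_congr rfl fun y _ => by rw [pushw_id]
  have e2 : entw p (Prod.fst : G × G → G) = ∑ a, negMulLog (pX p a) := by
    unfold entw
    exact Finset.sum_congr rfl fun a _ => by rw [pushw_fst]
  calc entw (w3 p) (fun z => z) = ∑ z, negMulLog (w3 p z) := by
        unfold entw
        exact Finset.sum_congr rfl fun z _ => by rw [pushw_id]
    _ = 2 * (∑ y, negMulLog (p y)) - ∑ a, negMulLog (pX p a) := w3_ent hp
    _ = 2 * entw p (fun y => y) - entw p Prod.fst := by rw [e1, e2]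

end conc

theorem abstract_main {G : Type*} [AddCommGroup G] [Fintype G] (p : G × G → ℝ)
    (hp : ∀ z, 0 ≤ p z) (hp1 : ∑ y, p y = 1) :
    5 * entw p (fun y => y) - 4 * entw p Prod.fst - 4 * entw p Prod.snd
      - 3 * entw p (fun y => y.1 + y.2) + entw p (fun y => y.1 - y.2) ≤ 0 := by
  have hw : ∀ z, 0 ≤ w3 p z := w3_nonneg hp
  have hw1 : ∑ z, w3 p z = 1 := by rw [sum_w3 hp, hp1]
  set W := w3 p with hW
  set P := entw p (fun y : G × G => y) with hP
  set x := entw p (Prod.fst : G × G → G) with hx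
  set y' := entw p (Prod.snd : G × G → G) with hy
  set sE := entw p (fun y : G × G => y.1 + y.2) with hsE
  set dE := entw p (fun y : G × G => y.1 - y.2) with hdE
  have hXY : entw W (fun z : G × G × G => (z.1, z.2.1)) = P := entw_w3_12e hp (fun y => y)
  have hXf : entw W (fun z : G × G × G => z.1) = x := entw_w3_12e hp Prod.fst
  have hYf : entw W (fun z : G × G × G => z.2.1) = y' := entw_w3_12e hp Prod.snd
  have hY1f : entw W (fun z : G × G × G => z.2.2) = y' := entw_w3_13e hp Prod.snd
  have hS1 : entw W (fun z : G × G × G => z.1 + z.2.1) = sE :=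
    entw_w3_12e hp (fun y => y.1 + y.2)
  have hS2 : entw W (fun z : G × G × G => z.1 + z.2.2) = sE :=
    entw_w3_13e hp (fun y => y.1 + y.2)
  have hD : entw W (fun z : G × G × G => z.1 - z.2.1) = dE :=
    entw_w3_12e hp (fun y => y.1 - y.2)
  have hFull : entw W (fun z : G × G × G => z) = 2 * P - x := entw_w3_id hp
  -- Step III : H[T] ≤ 2 y' + 2 sE - (2P - x)
  have s3 : entw W (fun z : G × G × G => (z.2.1, (z.2.2, z.1 + (z.2.1 + z.2.2))))
      + entw W (fun z : G × G × G => z.1 + (z.2.1 + z.2.2))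
      ≤ entw W (fun z : G × G × G => (z.2.1, z.1 + (z.2.1 + z.2.2)))
        + entw W (fun z : G × G × G => (z.2.2, z.1 + (z.2.1 + z.2.2))) :=
    submod W hw _ _ _
  have r1 : entw W (fun z : G × G × G => (z.2.1, (z.2.2, z.1 + (z.2.1 + z.2.2))))
      = 2 * P - x := by
    have h := entw_comp_inj W (fun z : G × G × G => z)
      (fun v : G × G × G => (v.2.1, (v.2.2, v.1 + (v.2.1 + v.2.2))))
      (by
        intro v v' hvv
        simp only [Prod.mk.injEq] at hvv
        obtain ⟨h1, h2, h3⟩ := hvv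
        rw [h1, h2] at h3
        exact Prod.ext (add_right_cancel h3) (Prod.ext h1 h2))
    exact h.trans hFull
  have r2 : entw W (fun z : G × G × G => (z.2.1, z.1 + (z.2.1 + z.2.2)))
      = entw W (fun z : G × G × G => (z.2.1, z.1 + z.2.2)) := by
    have efun : (fun z : G × G × G => (z.2.1, z.1 + (z.2.1 + z.2.2)))
        = (fun z : G × G × G => ((fun q : G × G => (q.1, q.1 + q.2)) (z.2.1, z.1 + z.2.2))) := by
      funext z
      show _ = (z.2.1, z.2.1 + (z.1 + z.2.2))
      have : z.1 + (z.2.1 + z.2.2) = z.2.1 + (z.1 + z.2.2) := by abel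
      rw [this]
    rw [efun]
    exact entw_comp_inj W (fun z : G × G × G => (z.2.1, z.1 + z.2.2))
      (fun q : G × G => (q.1, q.1 + q.2))
      (by
        intro q q' hq
        simp only [Prod.mk.injEq] at hq
        obtain ⟨h1, h2⟩ := hq
        rw [h1] at h2
        exact Prod.ext h1 (add_left_cancel h2))
  have r3 : entw W (fun z : G × G × G => (z.2.2, z.1 + (z.2.1 + z.2.2)))
      = entw W (fun z : G × G × G => (z.2.2, z.1 + z.2.1)) := by
    have efun : (fun z : G × G × G => (z.2.2, z.1 + (z.2.1 + z.2.2)))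
        = (fun z : G × G × G => ((fun q : G × G => (q.1, q.1 + q.2)) (z.2.2, z.1 + z.2.1))) := by
      funext z
      show _ = (z.2.2, z.2.2 + (z.1 + z.2.1))
      have : z.1 + (z.2.1 + z.2.2) = z.2.2 + (z.1 + z.2.1) := by abel
      rw [this]
    rw [efun]
    exact entw_comp_inj W (fun z : G × G × G => (z.2.2, z.1 + z.2.1))
      (fun q : G × G => (q.1, q.1 + q.2))
      (by
        intro q q' hq
        simp only [Prod.mk.injEq] at hq
        obtain ⟨h1, h2⟩ := hq
        rw [h1] at h2
        exact Prod.ext h1 (add_left_cancel h2))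
  have sub1 : entw W (fun z : G × G × G => (z.2.1, z.1 + z.2.2))
      ≤ entw W (fun z : G × G × G => z.2.1) + entw W (fun z : G × G × G => z.1 + z.2.2) :=
    entw_pair_le W hw hw1 _ _
  have sub2 : entw W (fun z : G × G × G => (z.2.2, z.1 + z.2.1))
      ≤ entw W (fun z : G × G × G => z.2.2) + entw W (fun z : G × G × G => z.1 + z.2.1) :=
    entw_pair_le W hw hw1 _ _
  -- Step II : H[Y+Y1] ≤ x + H[T] + 2 y' - (2P - x)
  have s2 : entw W (fun z : G × G × G => (z.1, (z.2, z.2.1 + z.2.2)))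
      + entw W (fun z : G × G × G => z.2.1 + z.2.2)
      ≤ entw W (fun z : G × G × G => (z.1, z.2.1 + z.2.2))
        + entw W (fun z : G × G × G => (z.2, z.2.1 + z.2.2)) :=
    submod W hw _ _ _
  have q1 : entw W (fun z : G × G × G => (z.1, (z.2, z.2.1 + z.2.2))) = 2 * P - x := by
    have h := entw_comp_inj W (fun z : G × G × G => z)
      (fun v : G × G × G => (v.1, (v.2, v.2.1 + v.2.2)))
      (by
        intro v v' hvv
        simp only [Prod.mk.injEq] at hvv
        exact Prod.ext hvv.1 hvv.2.1)
    exact h.trans hFull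
  have q2 : entw W (fun z : G × G × G => (z.2, z.2.1 + z.2.2))
      = entw W (fun z : G × G × G => z.2) :=
    entw_comp_inj W (fun z : G × G × G => z.2) (fun q : G × G => (q, q.1 + q.2))
      (fun q q' hq => by simp only [Prod.mk.injEq] at hq; exact hq.1)
  have q3 : entw W (fun z : G × G × G => (z.1, z.1 + (z.2.1 + z.2.2)))
      = entw W (fun z : G × G × G => (z.1, z.2.1 + z.2.2)) :=
    entw_comp_inj W (fun z : G × G × G => (z.1, z.2.1 + z.2.2))
      (fun q : G × G => (q.1, q.1 + q.2))
      (by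
        intro q q' hq
        simp only [Prod.mk.injEq] at hq
        obtain ⟨h1, h2⟩ := hq
        rw [h1] at h2
        exact Prod.ext h1 (add_left_cancel h2))
  have sub3 : entw W (fun z : G × G × G => (z.1, z.1 + (z.2.1 + z.2.2)))
      ≤ entw W (fun z : G × G × G => z.1)
        + entw W (fun z : G × G × G => z.1 + (z.2.1 + z.2.2)) :=
    entw_pair_le W hw hw1 _ _
  have sub4 : entw W (fun z : G × G × G => z.2)
      ≤ entw W (fun z : G × G × G => z.2.1) + entw W (fun z : G × G × G => z.2.2) :=
    entw_pair_le W hw hw1 (fun z : G × G × G => z.2.1) (fun z : G × G × G => z.2.2)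
  -- Step I : dE ≤ sE + H[Y+Y1] - P + x
  have s1 : entw W (fun z : G × G × G => (z.1 + z.2.2, ((z.1, z.2.1), z.1 - z.2.1)))
      + entw W (fun z : G × G × G => z.1 - z.2.1)
      ≤ entw W (fun z : G × G × G => (z.1 + z.2.2, z.1 - z.2.1))
        + entw W (fun z : G × G × G => ((z.1, z.2.1), z.1 - z.2.1)) :=
    submod W hw (fun z : G × G × G => z.1 + z.2.2) (fun z : G × G × G => (z.1, z.2.1))
      (fun z : G × G × G => z.1 - z.2.1)
  have t1 : entw W (fun z : G × G × G => ((z.1, z.2.1), z.1 - z.2.1)) = P := by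
    have h := entw_comp_inj W (fun z : G × G × G => (z.1, z.2.1))
      (fun q : G × G => (q, q.1 - q.2))
      (fun q q' hq => by simp only [Prod.mk.injEq] at hq; exact hq.1)
    exact h.trans hXY
  have t2 : entw W (fun z : G × G × G => (z.1 + z.2.2, ((z.1, z.2.1), z.1 - z.2.1)))
      = 2 * P - x := by
    have h1 := entw_comp_inj W (fun z : G × G × G => (z.1 + z.2.2, (z.1, z.2.1)))
      (fun q : G × (G × G) => (q.1, (q.2, q.2.1 - q.2.2)))
      (by
        intro q q' hq
        simp only [Prod.mk.injEq] at hq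
        exact Prod.ext hq.1 hq.2.1)
    have h2 := entw_comp_inj W (fun z : G × G × G => z)
      (fun v : G × G × G => (v.1 + v.2.2, (v.1, v.2.1)))
      (by
        intro v v' hvv
        simp only [Prod.mk.injEq] at hvv
        obtain ⟨e3, e1, e2⟩ := hvv
        rw [e1] at e3
        exact Prod.ext e1 (Prod.ext e2 (add_left_cancel e3)))
    exact h1.trans (h2.trans hFull)
  have t4 : entw W (fun z : G × G × G => (z.1 + z.2.2, z.2.1 + z.2.2))
      = entw W (fun z : G × G × G => (z.1 + z.2.2, z.1 - z.2.1)) := by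
    have efun : (fun z : G × G × G => (z.1 + z.2.2, z.2.1 + z.2.2))
        = (fun z : G × G × G =>
            ((fun q : G × G => (q.1, q.1 - q.2)) (z.1 + z.2.2, z.1 - z.2.1))) := by
      funext z
      show _ = (z.1 + z.2.2, z.1 + z.2.2 - (z.1 - z.2.1))
      have : z.1 + z.2.2 - (z.1 - z.2.1) = z.2.1 + z.2.2 := by abel
      rw [this]
    rw [efun]
    exact entw_comp_inj W (fun z : G × G × G => (z.1 + z.2.2, z.1 - z.2.1))
      (fun q : G × G => (q.1, q.1 - q.2))
      (by
        intro q q' hq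
        simp only [Prod.mk.injEq] at hq
        obtain ⟨h1, h2⟩ := hq
        have h3 : q.2 = q'.2 := by
          have hc := sub_sub_cancel q.1 q.2
          rw [h2, h1] at hc
          rw [← hc]
          exact sub_sub_cancel _ _
        exact Prod.ext h1 h3)
  have t5 : entw W (fun z : G × G × G => (z.1 + z.2.2, z.2.1 + z.2.2))
      ≤ entw W (fun z : G × G × G => z.1 + z.2.2)
        + entw W (fun z : G × G × G => z.2.1 + z.2.2) :=
    entw_pair_le W hw hw1 _ _
  -- assemble
  rw [hS2] at sub1 t5
  rw [hS1] at sub2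
  rw [hYf] at sub1 sub4
  rw [hY1f] at sub2 sub4
  rw [hXf] at sub3
  rw [r1, r2, r3] at s3
  rw [q1, q2, q3.symm] at s2
  rw [t1, t2, hD, t4.symm] at s1
  linarith [s1, s2, s3, sub1, sub2, sub3, sub4, t5]


section meas
variable {Ω G : Type*} [MeasurableSpace Ω] [Fintype G]
    [MeasurableSpace G] [MeasurableSingletonClass G]
    (μ : Measure Ω) [IsProbabilityMeasure μ]
    (X Y : Ω → G)

lemma pair_meas (hX : Measurable X) (hY : Measurable Y) (z : G × G) :
    MeasurableSet ((fun ω => (X ω, Y ω)) ⁻¹' {z}) := by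
  have hset : (fun ω => (X ω, Y ω)) ⁻¹' {z} = X ⁻¹' {z.1} ∩ Y ⁻¹' {z.2} := by
    ext ω
    simp [Prod.ext_iff]
  rw [hset]
  exact (hX (measurableSet_singleton _)).inter (hY (measurableSet_singleton _))

lemma measure_fiber (hX : Measurable X) (hY : Measurable Y) {S : Type*} [Fintype S]
    (f : G × G → S) (s : S) :
    (μ ((fun ω => f (X ω, Y ω)) ⁻¹' {s})).toReal
      = pushw (fun z : G × G => (μ ((fun ω => (X ω, Y ω)) ⁻¹' {z})).toReal) f s := by
  have hsplit : (fun ω => f (X ω, Y ω)) ⁻¹' {s}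
      = ⋃ z ∈ (Finset.univ.filter (fun z : G × G => f z = s)),
          (fun ω => (X ω, Y ω)) ⁻¹' {z} := by
    ext ω
    simp only [Set.mem_preimage, Set.mem_singleton_iff, Set.mem_iUnion, Finset.mem_filter,
      Finset.mem_univ, true_and, exists_prop]
    constructor
    · intro h
      exact ⟨(X ω, Y ω), h, rfl⟩
    · rintro ⟨z, hz, h⟩
      rw [h]
      exact hz
  have hdisj : (↑(Finset.univ.filter (fun z : G × G => f z = s)) : Set (G × G)).PairwiseDisjoint
      (fun z => (fun ω => (X ω, Y ω)) ⁻¹' {z}) := by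
    intro z1 _ z2 _ hne
    simp only [Function.onFun]
    rw [Set.disjoint_left]
    intro ω h1 h2
    have e1 : (X ω, Y ω) = z1 := h1
    have e2 : (X ω, Y ω) = z2 := h2
    exact hne (by rw [← e1, e2])
  rw [hsplit, measure_biUnion_finset hdisj (fun z _ => pair_meas X Y hX hY z),
    ENNReal.toReal_sum (fun z _ => measure_ne_top μ _)]
  unfold pushw
  rw [Finset.sum_filter]

lemma ent_eq_entw (hX : Measurable X) (hY : Measurable Y) {S : Type*} [Fintype S]
    (f : G × G → S) :
    ent μ (fun ω => f (X ω, Y ω))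
      = entw (fun z : G × G => (μ ((fun ω => (X ω, Y ω)) ⁻¹' {z})).toReal) f := by
  unfold ent entw
  exact Finset.sum_congr rfl fun s _ => by rw [measure_fiber μ X Y hX hY f s]

lemma sum_p_one (hX : Measurable X) (hY : Measurable Y) :
    ∑ z : G × G, (μ ((fun ω => (X ω, Y ω)) ⁻¹' {z})).toReal = 1 := by
  have h := measure_fiber μ X Y hX hY (fun _ => ()) ()
  have huniv : ((fun ω => (fun _ : G × G => ()) (X ω, Y ω)) ⁻¹' {()}) = Set.univ := by
    ext ω
    simp
  rw [huniv] at h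
  have hp1 : (μ Set.univ).toReal = 1 := by
    rw [measure_univ, ENNReal.toReal_one]
  rw [hp1] at h
  unfold pushw at h
  simpa using h.symm

end meas
end Stmt9Aux

theorem stmt9 {Ω G : Type*} [MeasurableSpace Ω] [AddCommGroup G] [Fintype G]
    [MeasurableSpace G] [MeasurableSingletonClass G]
    (μ : Measure Ω) [IsProbabilityMeasure μ]
    (X Y : Ω → G) (hX : Measurable X) (hY : Measurable Y) :
    5 * ent μ (fun ω => (X ω, Y ω)) - 4 * ent μ X - 4 * ent μ Y
      - 3 * ent μ (fun ω => X ω + Y ω) + ent μ (fun ω => X ω - Y ω) ≤ 0 := by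
  classical
  set p : G × G → ℝ := fun z => (μ ((fun ω => (X ω, Y ω)) ⁻¹' {z})).toReal with hpdef
  have hp : ∀ z, 0 ≤ p z := fun z => ENNReal.toReal_nonneg
  have hp1 : ∑ y, p y = 1 := Stmt9Aux.sum_p_one μ X Y hX hY
  have h1 : ent μ (fun ω => (X ω, Y ω)) = Stmt9Aux.entw p (fun y : G × G => y) :=
    Stmt9Aux.ent_eq_entw μ X Y hX hY (fun y => y)
  have h2 : ent μ X = Stmt9Aux.entw p (Prod.fst : G × G → G) :=
    Stmt9Aux.ent_eq_entw μ X Y hX hY Prod.fst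
  have h3 : ent μ Y = Stmt9Aux.entw p (Prod.snd : G × G → G) :=
    Stmt9Aux.ent_eq_entw μ X Y hX hY Prod.snd
  have h4 : ent μ (fun ω => X ω + Y ω) = Stmt9Aux.entw p (fun y : G × G => y.1 + y.2) :=
    Stmt9Aux.ent_eq_entw μ X Y hX hY (fun y => y.1 + y.2)
  have h5 : ent μ (fun ω => X ω - Y ω) = Stmt9Aux.entw p (fun y : G × G => y.1 - y.2) :=
    Stmt9Aux.ent_eq_entw μ X Y hX hY (fun y => y.1 - y.2)
  rw [h1, h2, h3, h4, h5]
  exact Stmt9Aux.abstract_main p hp hp1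
end

section
/- If X and Y are independent discrete random variables taking values in an abelian group, then H(X − Y) ≤ 3 H(X + Y) − H(X) − H(Y). -/
/-!
Let `Y'` be a copy of `Y` such that `X, Y, Y'` are independent. Submodularity of entropy,
`H(A, B) + H(C) ≤ H(A) + H(B)` whenever `C` is a function both of `A` and of `B`, gives
* `H(X + Y + Y') + H(X) ≤ H(X + Y) + H(X + Y')`, with `A = (X + Y, Y')`, `B = (X + Y', Y)`;
* `H(X - Y') + H(Y) ≤ H(X + Y) + H(Y + Y')`, with `A = (X + Y, Y + Y')`, `B = (X, Y')`;
and independence gives `H(Y + Y') ≤ H(X + Y + Y')`. Chaining the three, and using that `(X, Y')`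
has the law of `(X, Y)`, yields the claim.

The triple `X, Y, Y'` is realised as the coordinates of `G × G × G` weighted by
`p(x) q(y) q(y')`, where `p` and `q` are the laws of `X` and `Y`; all entropies then become finite
sums over a weighted finite type.
-/

open MeasureTheory ProbabilityTheory Real

open Finset

namespace Weighted

variable {Ω S T U V : Type*} [Fintype Ω]

noncomputable def law [DecidableEq S] (w : Ω → ℝ) (f : Ω → S) (s : S) : ℝ :=
  ∑ ω with f ω = s, w ω

noncomputable def entropy [Fintype S] [DecidableEq S] (w : Ω → ℝ) (f : Ω → S) : ℝ :=
  ∑ s, negMulLog (law w f s)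

def prodWeight (u : S → ℝ) (v : T → ℝ) (x : S × T) : ℝ :=
  u x.1 * v x.2

def IndepFun [DecidableEq S] [DecidableEq T] (w : Ω → ℝ) (f : Ω → S) (g : Ω → T) : Prop :=
  law w (fun ω => (f ω, g ω)) = prodWeight (law w f) (law w g)

lemma prodWeight_nonneg {u : S → ℝ} {v : T → ℝ} (hu : 0 ≤ u) (hv : 0 ≤ v) :
    0 ≤ prodWeight u v :=
  fun x => mul_nonneg (hu x.1) (hv x.2)

lemma sum_prodWeight [Fintype S] [Fintype T] (u : S → ℝ) (v : T → ℝ) :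
    ∑ x, prodWeight u v x = (∑ s, u s) * ∑ t, v t := by
  rw [Fintype.sum_prod_type, sum_mul_sum]
  rfl

variable [DecidableEq S] [DecidableEq T] [DecidableEq U] [DecidableEq V] {w : Ω → ℝ}

section Law

lemma law_nonneg (hw : 0 ≤ w) (f : Ω → S) (s : S) : 0 ≤ law w f s :=
  sum_nonneg fun ω _ => hw ω

lemma exists_eq_of_law_ne_zero {f : Ω → S} {s : S} (h : law w f s ≠ 0) : ∃ ω, f ω = s := by
  obtain ⟨ω, hω, -⟩ := exists_ne_zero_of_sum_ne_zero h
  exact ⟨ω, (mem_filter.1 hω).2⟩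

lemma sum_law_mul [Fintype S] (w : Ω → ℝ) (f : Ω → S) (F : S → ℝ) :
    ∑ s, law w f s * F s = ∑ ω, w ω * F (f ω) := by
  simp only [law, sum_mul]
  rw [← sum_fiberwise univ f (fun ω => w ω * F (f ω))]
  exact sum_congr rfl fun s _ => sum_congr rfl fun ω hω => by rw [(mem_filter.1 hω).2]

lemma sum_law [Fintype S] (w : Ω → ℝ) (f : Ω → S) : ∑ s, law w f s = ∑ ω, w ω := by
  simpa using sum_law_mul w f 1

lemma law_comp [Fintype S] (w : Ω → ℝ) (f : Ω → S) (φ : S → T) :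
    law w (fun ω => φ (f ω)) = law (law w f) φ := by
  ext t
  have := sum_law_mul w f (fun s => if φ s = t then 1 else 0)
  simp only [mul_ite, mul_one, mul_zero, ← sum_filter] at this
  exact this.symm

lemma law_id [DecidableEq Ω] (w : Ω → ℝ) : law w (fun ω => ω) = w := by
  ext ω
  simp [law, filter_eq']

lemma law_equiv {Ω' : Type*} [DecidableEq Ω'] (w : Ω → ℝ) (e : Ω ≃ Ω') :
    law w e = fun x => w (e.symm x) := by
  ext x
  rw [law, sum_filter, Fintype.sum_eq_single (e.symm x) fun ω hω => if_neg ?_, if_pos (by simp)]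
  rwa [← e.eq_symm_apply]

lemma law_le_law_comp [Fintype S] (hw : 0 ≤ w) (f : Ω → S) (φ : S → T) (s : S) :
    law w f s ≤ law w (fun ω => φ (f ω)) (φ s) := by
  rw [law_comp w f φ]
  exact single_le_sum (f := law w f) (fun s _ => law_nonneg hw f s) (by simp)

lemma law_prodWeight_map {α β : Type*} [Fintype α] [Fintype β] (u : α → ℝ) (v : β → ℝ)
    (φ : α → U) (ψ : β → V) :
    law (prodWeight u v) (fun x => (φ x.1, ψ x.2)) = prodWeight (law u φ) (law v ψ) := by
  ext ⟨a, b⟩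
  simp only [law, prodWeight, sum_filter, Fintype.sum_prod_type, Prod.mk.injEq, sum_mul_sum]
  refine sum_congr rfl fun s _ => sum_congr rfl fun t _ => ?_
  split_ifs <;> simp_all

lemma law_prodWeight_fst {β : Type*} [Fintype S] [Fintype β] (u : S → ℝ) {v : β → ℝ}
    (hv : ∑ t, v t = 1) : law (prodWeight u v) Prod.fst = u := by
  ext s
  simp [law, prodWeight, sum_filter, Fintype.sum_prod_type, ← mul_sum, hv]

lemma law_prodWeight_snd {α : Type*} [Fintype α] [Fintype T] {u : α → ℝ} (v : T → ℝ)
    (hu : ∑ s, u s = 1) : law (prodWeight u v) Prod.snd = v := by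
  ext t
  simp [law, prodWeight, sum_filter, Fintype.sum_prod_type, ← sum_mul, hu]

lemma law_prodWeight_assoc {α : Type*} [Fintype α] [DecidableEq α] [Fintype S] [Fintype T]
    (u : α → ℝ) (v : S → ℝ) (r : T → ℝ) :
    law (prodWeight u (prodWeight v r)) (fun x => ((x.1, x.2.1), x.2.2)) =
      prodWeight (prodWeight u v) r := by
  rw [show (fun x : α × S × T => ((x.1, x.2.1), x.2.2)) = (Equiv.prodAssoc α S T).symm from rfl,
    law_equiv]
  ext
  simp [prodWeight, mul_assoc]

lemma law_prodWeight_assoc_swap {α : Type*} [Fintype α] [DecidableEq α] [Fintype S] [Fintype T]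
    (u : α → ℝ) (v : S → ℝ) (r : T → ℝ) :
    law (prodWeight u (prodWeight v r)) (fun x => ((x.1, x.2.2), x.2.1)) =
      prodWeight (prodWeight u r) v := by
  let e : α × S × T ≃ (α × T) × S :=
    ⟨fun x => ((x.1, x.2.2), x.2.1), fun y => (y.1.1, y.2, y.1.2), fun _ => rfl, fun _ => rfl⟩
  rw [show (fun x : α × S × T => ((x.1, x.2.2), x.2.1)) = e from rfl, law_equiv]
  ext
  simp only [e, prodWeight, Equiv.coe_fn_symm_mk]
  ring

end Law

section Entropy

lemma entropy_eq_neg_sum_mul_log [Fintype S] (w : Ω → ℝ) (f : Ω → S) :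
    entropy w f = -∑ ω, w ω * log (law w f (f ω)) := by
  simp [entropy, negMulLog, ← sum_law_mul w f (fun s => log (law w f s))]

lemma entropy_comp [Fintype S] [Fintype T] (w : Ω → ℝ) (f : Ω → S) (φ : S → T) :
    entropy w (fun ω => φ (f ω)) = entropy (law w f) φ := by
  rw [entropy, law_comp]
  rfl

lemma entropy_comp_of_law_eq [Fintype S] [Fintype T] {f : Ω → S} {u : S → ℝ} (h : law w f = u)
    (φ : S → T) : entropy w (fun ω => φ (f ω)) = entropy u φ := by
  rw [entropy_comp, h]

lemma entropy_comp_of_injective [Fintype S] [Fintype T] (w : Ω → ℝ) (f : Ω → S) {φ : S → T}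
    (hφ : Function.Injective φ) : entropy w (fun ω => φ (f ω)) = entropy w f := by
  rw [entropy_comp, entropy, entropy]
  generalize law w f = u
  refine (Fintype.sum_of_injective φ hφ _ _ (fun t ht => ?_) fun s => ?_).symm
  · rw [law, filter_false_of_mem fun s _ hs => ht ⟨s, hs⟩, sum_empty, negMulLog_zero]
  · rw [law, filter_congr fun s' _ => hφ.eq_iff, filter_eq', if_pos (mem_univ s), sum_singleton]

lemma mul_log_sub_mul_log_le {a c : ℝ} (ha : 0 ≤ a) (hc : 0 ≤ c) (hac : a ≠ 0 → c ≠ 0) :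
    a * log c - a * log a ≤ c - a := by
  rcases ha.eq_or_lt with rfl | ha
  · simpa using hc
  have hc : 0 < c := hc.lt_of_ne (hac ha.ne').symm
  have := mul_le_mul_of_nonneg_left (log_le_sub_one_of_pos (div_pos hc ha)) ha.le
  rwa [log_div hc.ne' ha.ne', mul_sub, mul_sub, mul_one, mul_div_cancel₀ _ ha.ne'] at this

/-- Gibbs' inequality. -/
lemma sum_mul_log_le_sum_mul_log {ι : Type*} [Fintype ι] {a c : ι → ℝ} (ha : 0 ≤ a) (hc : 0 ≤ c)
    (hac : ∀ i, a i ≠ 0 → c i ≠ 0) (hsum : ∑ i, c i ≤ ∑ i, a i) :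
    ∑ i, a i * log (c i) ≤ ∑ i, a i * log (a i) := by
  have := sum_le_sum fun i (_ : i ∈ univ) => mul_log_sub_mul_log_le (ha i) (hc i) (hac i)
  rw [sum_sub_distrib, sum_sub_distrib] at this
  linarith

/-- The law of `(f, g)` made conditionally independent given the common value
`φ ∘ f = ψ ∘ g`. -/
noncomputable def condIndepLaw (w : Ω → ℝ) (f : Ω → S) (g : Ω → T) (φ : S → U) (ψ : T → U)
    (x : S × T) : ℝ :=
  if φ x.1 = ψ x.2 then law w f x.1 * law w g x.2 / law w (fun ω => φ (f ω)) (φ x.1) else 0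

variable {f : Ω → S} {g : Ω → T} {φ : S → U} {ψ : T → U}

lemma condIndepLaw_nonneg (hw : 0 ≤ w) : 0 ≤ condIndepLaw w f g φ ψ := fun x => by
  unfold condIndepLaw
  split_ifs
  · exact div_nonneg (mul_nonneg (law_nonneg hw f x.1) (law_nonneg hw g x.2)) (law_nonneg hw _ _)
  · exact le_rfl

variable [Fintype S] [Fintype T]

lemma sum_condIndepLaw_le (hw : 0 ≤ w) (hfg : ∀ ω, φ (f ω) = ψ (g ω)) :
    ∑ x, condIndepLaw w f g φ ψ x ≤ ∑ ω, w ω := by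
  set C := law w (fun ω => φ (f ω))
  have hC : law (law w g) ψ = C := by
    rw [← law_comp]
    exact congrArg (law w) (funext fun ω => (hfg ω).symm)
  calc ∑ x, condIndepLaw w f g φ ψ x
      = ∑ s, law w f s / C (φ s) * law (law w g) ψ (φ s) := by
        rw [Fintype.sum_prod_type]
        refine sum_congr rfl fun s _ => ?_
        rw [show law (law w g) ψ (φ s) = ∑ t with ψ t = φ s, law w g t from rfl, sum_filter,
          mul_sum]
        refine sum_congr rfl fun t _ => ?_
        by_cases h : ψ t = φ s
        · simp [condIndepLaw, C, h, mul_div_right_comm]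
        · simp [condIndepLaw, h, Ne.symm h]
    _ = ∑ s, law w f s * (C (φ s) / C (φ s)) := by simp only [hC, mul_div_assoc']; ring_nf
    _ ≤ ∑ s, law w f s :=
        sum_le_sum fun s _ => mul_le_of_le_one_right (law_nonneg hw f s) (div_self_le_one _)
    _ = ∑ ω, w ω := sum_law w f

lemma condIndepLaw_eq_of_law_ne_zero (hw : 0 ≤ w) (hfg : ∀ ω, φ (f ω) = ψ (g ω)) {x : S × T}
    (hx : law w (fun ω => (f ω, g ω)) x ≠ 0) :
    condIndepLaw w f g φ ψ x = law w f x.1 * law w g x.2 / law w (fun ω => φ (f ω)) (φ x.1) ∧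
      0 < law w f x.1 ∧ 0 < law w g x.2 ∧ 0 < law w (fun ω => φ (f ω)) (φ x.1) := by
  have hJ : 0 < law w (fun ω => (f ω, g ω)) x := (law_nonneg hw _ x).lt_of_ne' hx
  have hA : 0 < law w f x.1 := hJ.trans_le (law_le_law_comp hw _ Prod.fst x)
  obtain ⟨ω, rfl⟩ := exists_eq_of_law_ne_zero hx
  exact ⟨if_pos (hfg ω), hA, hJ.trans_le (law_le_law_comp hw _ Prod.snd _),
    hA.trans_le (law_le_law_comp hw f φ _)⟩

theorem entropy_pair_add_entropy_le [Fintype U] (hw : 0 ≤ w) (f : Ω → S) (g : Ω → T)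
    {k : Ω → U} (φ : S → U) (ψ : T → U) (hf : ∀ ω, φ (f ω) = k ω) (hg : ∀ ω, ψ (g ω) = k ω) :
    entropy w (fun ω => (f ω, g ω)) + entropy w k ≤ entropy w f + entropy w g := by
  obtain rfl : (fun ω => φ (f ω)) = k := funext hf
  have hfg (ω : Ω) : φ (f ω) = ψ (g ω) := (hg ω).symm
  set J := law w (fun ω => (f ω, g ω))
  -- Gibbs' inequality for `J` against `condIndepLaw`, i.e. `I(f; g | k) ≥ 0`.
  have key : ∑ x, J x * (log (law w f x.1) + log (law w g x.2) -
      log (law w (fun ω => φ (f ω)) (φ x.1))) ≤ ∑ x, J x * log (J x) := by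
    refine le_of_eq_of_le (sum_congr rfl fun x _ => ?_) (sum_mul_log_le_sum_mul_log
      (c := condIndepLaw w f g φ ψ) (law_nonneg hw _) (condIndepLaw_nonneg hw) (fun x hx => ?_)
      ((sum_condIndepLaw_le hw hfg).trans (sum_law w _).ge))
    · by_cases hx : J x = 0
      · simp [hx]
      obtain ⟨hc, hA, hB, hC⟩ := condIndepLaw_eq_of_law_ne_zero hw hfg hx
      rw [hc, log_div (by positivity) hC.ne', log_mul hA.ne' hB.ne']
    · obtain ⟨hc, hA, hB, hC⟩ := condIndepLaw_eq_of_law_ne_zero hw hfg hx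
      rw [hc]
      positivity
  rw [sum_law_mul, sum_law_mul] at key
  simp only [mul_add, mul_sub, sum_add_distrib, sum_sub_distrib] at key
  rw [entropy_eq_neg_sum_mul_log w f, entropy_eq_neg_sum_mul_log w g,
    entropy_eq_neg_sum_mul_log w (fun ω => φ (f ω)),
    entropy_eq_neg_sum_mul_log w (fun ω => (f ω, g ω))]
  linarith

theorem entropy_pair_le (hw : 0 ≤ w) (hw1 : ∑ ω, w ω = 1) (f : Ω → S) (g : Ω → T) :
    entropy w (fun ω => (f ω, g ω)) ≤ entropy w f + entropy w g := by
  have h := entropy_pair_add_entropy_le hw f g (fun _ => ()) (fun _ => ()) (fun _ => rfl)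
    fun _ => rfl
  have h0 : entropy w (fun _ => ()) = 0 := by simp [entropy, law, hw1]
  linarith

end Entropy

section Independence

variable [Fintype S] [Fintype T] {f : Ω → S} {g : Ω → T}

lemma indepFun_of_law_eq_prodWeight {u : S → ℝ} {v : T → ℝ} (hu : ∑ s, u s = 1)
    (hv : ∑ t, v t = 1) (h : law w (fun ω => (f ω, g ω)) = prodWeight u v) : IndepFun w f g := by
  have hf : law w f = u := by
    rw [law_comp w (fun ω => (f ω, g ω)) Prod.fst, h, law_prodWeight_fst u hv]
  have hg : law w g = v := by
    rw [law_comp w (fun ω => (f ω, g ω)) Prod.snd, h, law_prodWeight_snd v hu]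
  rw [IndepFun, h, hf, hg]

lemma IndepFun.comp (h : IndepFun w f g) (φ : S → U) (ψ : T → V) :
    IndepFun w (fun ω => φ (f ω)) (fun ω => ψ (g ω)) := by
  rw [IndepFun, law_comp w (fun ω => (f ω, g ω)) (fun x => (φ x.1, ψ x.2)), h, law_prodWeight_map,
    ← law_comp, ← law_comp]

lemma IndepFun.entropy_pair (hw1 : ∑ ω, w ω = 1) (h : IndepFun w f g) :
    entropy w (fun ω => (f ω, g ω)) = entropy w f + entropy w g := by
  rw [entropy, h]
  simp only [Fintype.sum_prod_type, prodWeight, negMulLog_mul, sum_add_distrib,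
    ← sum_mul, ← mul_sum, sum_law, hw1, one_mul]
  rfl

end Independence

section AddCommGroup

variable {G : Type*} [AddCommGroup G] [Fintype G] [DecidableEq G] {X Y Z : Ω → G}

lemma IndepFun.entropy_le_entropy_add (hw : 0 ≤ w) (hw1 : ∑ ω, w ω = 1) (h : IndepFun w X Y) :
    entropy w Y ≤ entropy w (fun ω => X ω + Y ω) := by
  have hinj : Function.Injective (fun x : G × G => (x.1, x.1 + x.2)) := fun a b hab => by
    simp only [Prod.mk.injEq] at hab
    exact Prod.ext hab.1 (by simpa [hab.1] using hab.2)
  have hsub := entropy_pair_le hw hw1 X (fun ω => X ω + Y ω)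
  rw [entropy_comp_of_injective w (fun ω => (X ω, Y ω)) hinj, h.entropy_pair hw1] at hsub
  linarith

lemma entropy_add_add_add_le (hw : 0 ≤ w) (hw1 : ∑ ω, w ω = 1) (hXY : IndepFun w X Y)
    (hXYZ : IndepFun w (fun ω => (X ω, Y ω)) Z) (hXZY : IndepFun w (fun ω => (X ω, Z ω)) Y) :
    entropy w (fun ω => X ω + Y ω + Z ω) + entropy w X ≤
      entropy w (fun ω => X ω + Y ω) + entropy w (fun ω => X ω + Z ω) := by
  have hinj : Function.Injective
      (fun x : (G × G) × G => ((x.1.1 + x.1.2, x.2), (x.1.1 + x.2, x.1.2))) := fun a b hab => by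
    simp only [Prod.mk.injEq] at hab
    obtain ⟨⟨h1, h2⟩, -, h4⟩ := hab
    rw [h4] at h1
    exact Prod.ext (Prod.ext (add_right_cancel h1) h4) h2
  have hsub : entropy w (fun ω => ((X ω + Y ω, Z ω), (X ω + Z ω, Y ω))) +
      entropy w (fun ω => X ω + Y ω + Z ω) ≤
      entropy w (fun ω => (X ω + Y ω, Z ω)) + entropy w (fun ω => (X ω + Z ω, Y ω)) :=
    entropy_pair_add_entropy_le hw (fun ω => (X ω + Y ω, Z ω)) (fun ω => (X ω + Z ω, Y ω))
      (fun x => x.1 + x.2) (fun x => x.1 + x.2) (fun _ => rfl) fun _ => add_right_comm _ _ _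
  have hXY_Z : entropy w (fun ω => (X ω + Y ω, Z ω)) =
      entropy w (fun ω => X ω + Y ω) + entropy w Z :=
    (hXYZ.comp (fun x => x.1 + x.2) id).entropy_pair hw1
  have hXZ_Y : entropy w (fun ω => (X ω + Z ω, Y ω)) =
      entropy w (fun ω => X ω + Z ω) + entropy w Y :=
    (hXZY.comp (fun x => x.1 + x.2) id).entropy_pair hw1
  rw [entropy_comp_of_injective w (fun ω => ((X ω, Y ω), Z ω)) hinj, hXYZ.entropy_pair hw1,
    hXY.entropy_pair hw1, hXY_Z, hXZ_Y] at hsub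
  linarith

lemma entropy_sub_add_le (hw : 0 ≤ w) (hw1 : ∑ ω, w ω = 1) (hXY : IndepFun w X Y)
    (hXYZ : IndepFun w (fun ω => (X ω, Y ω)) Z) :
    entropy w (fun ω => X ω - Z ω) + entropy w Y ≤
      entropy w (fun ω => X ω + Y ω) + entropy w (fun ω => Y ω + Z ω) := by
  have hinj : Function.Injective
      (fun x : (G × G) × G => ((x.1.1 + x.1.2, x.1.2 + x.2), (x.1.1, x.2))) := fun a b hab => by
    simp only [Prod.mk.injEq] at hab
    obtain ⟨⟨h1, -⟩, h3, h4⟩ := hab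
    rw [h3] at h1
    exact Prod.ext (Prod.ext h3 (add_left_cancel h1)) h4
  have hsub : entropy w (fun ω => ((X ω + Y ω, Y ω + Z ω), (X ω, Z ω))) +
      entropy w (fun ω => X ω - Z ω) ≤
      entropy w (fun ω => (X ω + Y ω, Y ω + Z ω)) + entropy w (fun ω => (X ω, Z ω)) :=
    entropy_pair_add_entropy_le hw (fun ω => (X ω + Y ω, Y ω + Z ω)) (fun ω => (X ω, Z ω))
      (fun x => x.1 - x.2) (fun x => x.1 - x.2) (fun _ => by dsimp only; abel) fun _ => rfl
  have hXZ : entropy w (fun ω => (X ω, Z ω)) = entropy w X + entropy w Z :=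
    (hXYZ.comp Prod.fst id).entropy_pair hw1
  rw [entropy_comp_of_injective w (fun ω => ((X ω, Y ω), Z ω)) hinj, hXYZ.entropy_pair hw1,
    hXY.entropy_pair hw1, hXZ] at hsub
  have := entropy_pair_le hw hw1 (fun ω => X ω + Y ω) (fun ω => Y ω + Z ω)
  linarith

theorem entropy_sub_le_of_indepFun (hw : 0 ≤ w) (hw1 : ∑ ω, w ω = 1) (hXY : IndepFun w X Y)
    (hXYZ : IndepFun w (fun ω => (X ω, Y ω)) Z) (hXZY : IndepFun w (fun ω => (X ω, Z ω)) Y)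
    (hX_YZ : IndepFun w X (fun ω => (Y ω, Z ω))) :
    entropy w (fun ω => X ω - Z ω) ≤ 2 * entropy w (fun ω => X ω + Y ω) +
      entropy w (fun ω => X ω + Z ω) - entropy w X - entropy w Y := by
  have h1 : entropy w (fun ω => Y ω + Z ω) ≤ entropy w (fun ω => X ω + (Y ω + Z ω)) :=
    (hX_YZ.comp id fun y => y.1 + y.2).entropy_le_entropy_add hw hw1
  simp only [← add_assoc] at h1
  have h2 := entropy_add_add_add_le hw hw1 hXY hXYZ hXZY
  have h3 := entropy_sub_add_le hw hw1 hXY hXYZ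
  linarith

theorem entropy_sub_le_prodWeight {p q : G → ℝ} (hp : 0 ≤ p) (hq : 0 ≤ q) (hp1 : ∑ x, p x = 1)
    (hq1 : ∑ y, q y = 1) :
    entropy (prodWeight p q) (fun x => x.1 - x.2) ≤
      3 * entropy (prodWeight p q) (fun x => x.1 + x.2) - entropy (prodWeight p q) Prod.fst -
        entropy (prodWeight p q) Prod.snd := by
  set P := prodWeight p q
  set W := prodWeight p (prodWeight q q)
  have hP1 : ∑ x, P x = 1 := by rw [sum_prodWeight, hp1, hq1, one_mul]
  have hqq1 : ∑ y, prodWeight q q y = 1 := by rw [sum_prodWeight, hq1, one_mul]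
  have hW1 : ∑ v, W v = 1 := by rw [sum_prodWeight, hp1, hqq1, one_mul]
  have hXYZ : law W (fun v => ((v.1, v.2.1), v.2.2)) = prodWeight P q := law_prodWeight_assoc p q q
  have hXZY : law W (fun v => ((v.1, v.2.2), v.2.1)) = prodWeight P q :=
    law_prodWeight_assoc_swap p q q
  have hXY : law W (fun v => (v.1, v.2.1)) = P := by
    rw [law_comp W (fun v => ((v.1, v.2.1), v.2.2)) Prod.fst, hXYZ, law_prodWeight_fst _ hq1]
  have hXZ : law W (fun v => (v.1, v.2.2)) = P := by
    rw [law_comp W (fun v => ((v.1, v.2.2), v.2.1)) Prod.fst, hXZY, law_prodWeight_fst _ hq1]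
  have key := entropy_sub_le_of_indepFun (prodWeight_nonneg hp (prodWeight_nonneg hq hq)) hW1
    (indepFun_of_law_eq_prodWeight hp1 hq1 hXY) (indepFun_of_law_eq_prodWeight hP1 hq1 hXYZ)
    (indepFun_of_law_eq_prodWeight hP1 hq1 hXZY) (indepFun_of_law_eq_prodWeight hp1 hqq1 (law_id W))
  rw [entropy_comp_of_law_eq hXZ (fun x => x.1 - x.2),
    entropy_comp_of_law_eq hXY (fun x => x.1 + x.2),
    entropy_comp_of_law_eq hXZ (fun x => x.1 + x.2),
    entropy_comp_of_law_eq hXY Prod.fst, entropy_comp_of_law_eq hXY Prod.snd] at key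
  linarith

end AddCommGroup

end Weighted

lemma ProbabilityTheory.IndepFun.measureReal_preimage_eq_law {Ω G H S : Type*}
    [MeasurableSpace Ω] [Fintype G] [Fintype H] [DecidableEq S] [MeasurableSpace G]
    [MeasurableSingletonClass G] [MeasurableSpace H] [MeasurableSingletonClass H]
    {μ : Measure Ω} [IsFiniteMeasure μ] {X : Ω → G} {Y : Ω → H} (hind : IndepFun X Y μ)
    (hX : Measurable X) (hY : Measurable Y) (F : G × H → S) (s : S) :
    μ.real ((fun ω => F (X ω, Y ω)) ⁻¹' {s}) =
      Weighted.law (Weighted.prodWeight (fun x => μ.real (X ⁻¹' {x}))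
        (fun y => μ.real (Y ⁻¹' {y}))) F s := by
  have hpair (x : G × H) : (fun ω => (X ω, Y ω)) ⁻¹' {x} = X ⁻¹' {x.1} ∩ Y ⁻¹' {x.2} := by
    ext
    simp [Prod.ext_iff]
  calc μ.real ((fun ω => F (X ω, Y ω)) ⁻¹' {s})
      = μ.real ((fun ω => (X ω, Y ω)) ⁻¹' ↑({x | F x = s} : Finset (G × H))) := by
        congr 1
        ext
        simp
    _ = ∑ x with F x = s, μ.real ((fun ω => (X ω, Y ω)) ⁻¹' {x}) :=
        (sum_measureReal_preimage_singleton _ fun x _ => hpair x ▸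
          (hX (measurableSet_singleton _)).inter (hY (measurableSet_singleton _))).symm
    _ = _ := sum_congr rfl fun x _ => by
        rw [hpair, measureReal_def, hind.measure_inter_preimage_eq_mul _ _
          (measurableSet_singleton _) (measurableSet_singleton _), ENNReal.toReal_mul]
        rfl

lemma ProbabilityTheory.IndepFun.ent_comp_eq_entropy {Ω G H S : Type*}
    [MeasurableSpace Ω] [Fintype G] [Fintype H] [Fintype S] [DecidableEq S] [MeasurableSpace G]
    [MeasurableSingletonClass G] [MeasurableSpace H] [MeasurableSingletonClass H]
    {μ : Measure Ω} [IsFiniteMeasure μ] {X : Ω → G} {Y : Ω → H} (hind : IndepFun X Y μ)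
    (hX : Measurable X) (hY : Measurable Y) (F : G × H → S) :
    ent μ (fun ω => F (X ω, Y ω)) =
      Weighted.entropy (Weighted.prodWeight (fun x => μ.real (X ⁻¹' {x}))
        (fun y => μ.real (Y ⁻¹' {y}))) F :=
  sum_congr rfl fun s _ => by rw [← hind.measureReal_preimage_eq_law hX hY F s]; rfl

theorem stmt10 {Ω G : Type*} [MeasurableSpace Ω] [AddCommGroup G] [Fintype G]
    [MeasurableSpace G] [MeasurableSingletonClass G]
    (μ : Measure Ω) [IsProbabilityMeasure μ]
    (X Y : Ω → G) (hX : Measurable X) (hY : Measurable Y)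
    (hind : IndepFun X Y μ) :
    ent μ (fun ω => X ω - Y ω) ≤
      3 * ent μ (fun ω => X ω + Y ω) - ent μ X - ent μ Y := by
  classical
  have hsum {Z : Ω → G} (hZ : Measurable Z) : ∑ x, μ.real (Z ⁻¹' {x}) = 1 := by
    rw [sum_measureReal_preimage_singleton _ fun x _ => hZ (measurableSet_singleton x)]
    simp
  have key := Weighted.entropy_sub_le_prodWeight (fun _ => measureReal_nonneg)
    (fun _ => measureReal_nonneg) (hsum hX) (hsum hY)
  rwa [← hind.ent_comp_eq_entropy hX hY, ← hind.ent_comp_eq_entropy hX hY,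
    ← hind.ent_comp_eq_entropy hX hY, ← hind.ent_comp_eq_entropy hX hY] at key
end

section
/- Let A, B, C, D be finite nonempty subsets of an abelian group G. Then |A| · |B| · |C + D| ≤ |A − B| · |C − B| · |A − D|. -/
open Pointwise Finset

theorem stmt13 {G : Type*} [AddCommGroup G] [DecidableEq G]
    (A B C D : Finset G) (hA : A.Nonempty) (hB : B.Nonempty)
    (hC : C.Nonempty) (hD : D.Nonempty) :
    A.card * B.card * (C + D).card ≤ (A - B).card * (C - B).card * (A - D).card := by
  have h1 : (C + D).card * B.card ≤ (C - B).card * (B - D).card :=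
    Finset.ruzsa_triangle_inequality_add_sub_sub C B D
  have h2 : (B - D).card * A.card ≤ (B - A).card * (D - A).card :=
    Finset.ruzsa_triangle_inequality_sub_sub_sub B A D
  have hcomm : ∀ X Y : Finset G, (X - Y).card = (Y - X).card := by
    intro X Y
    rw [← Finset.card_neg (Y - X)]
    congr 1
    ext x
    simp only [Finset.mem_neg, Finset.mem_sub]
    constructor
    · rintro ⟨a, ha, b, hb, rfl⟩; exact ⟨b - a, ⟨b, hb, a, ha, rfl⟩, by abel⟩
    · rintro ⟨y, ⟨a, ha, b, hb, rfl⟩, rfl⟩; exact ⟨b, hb, a, ha, by abel⟩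
  calc A.card * B.card * (C + D).card = ((C + D).card * B.card) * A.card := by ring
    _ ≤ ((C - B).card * (B - D).card) * A.card := Nat.mul_le_mul_right _ h1
    _ = (C - B).card * ((B - D).card * A.card) := by ring
    _ ≤ (C - B).card * ((B - A).card * (D - A).card) := Nat.mul_le_mul_left _ h2
    _ = (A - B).card * (C - B).card * (A - D).card := by rw [hcomm B A, hcomm D A]; ring
end

section
/- Let A, B be finite nonempty subsets of an abelian group G. Then |A + B| · |A| · |B| ≤ |A − B|^3. -/
open Pointwise

theorem stmt14 {G : Type*} [AddCommGroup G] [DecidableEq G]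
    (A B : Finset G) (hA : A.Nonempty) (hB : B.Nonempty) :
    (A + B).card * A.card * B.card ≤ (A - B).card ^ 3 := by
  have h1 : (A + B).card * B.card ≤ (A - B).card * (B - B).card :=
    Finset.ruzsa_triangle_inequality_add_sub_sub A B B
  have h2 : (B - B).card * A.card ≤ (B - A).card * (B - A).card :=
    Finset.ruzsa_triangle_inequality_sub_sub_sub B A B
  have h3 : (B - A).card = (A - B).card := by
    rw [← Finset.card_neg (A - B)]
    congr 1
    ext x
    simp only [Finset.mem_neg, Finset.mem_sub]
    constructor
    · rintro ⟨b, hb, a, ha, rfl⟩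
      exact ⟨a - b, ⟨a, ha, b, hb, rfl⟩, by abel⟩
    · rintro ⟨y, ⟨a, ha, b, hb, rfl⟩, rfl⟩
      exact ⟨b, hb, a, ha, by abel⟩
  calc (A + B).card * A.card * B.card
      = ((A + B).card * B.card) * A.card := by ring
    _ ≤ ((A - B).card * (B - B).card) * A.card := by
        exact Nat.mul_le_mul_right _ h1
    _ = (A - B).card * ((B - B).card * A.card) := by ring
    _ ≤ (A - B).card * ((B - A).card * (B - A).card) := by
        exact Nat.mul_le_mul_left _ h2
    _ = (A - B).card ^ 3 := by rw [h3]; ring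
end

section
/- Let G ⊆ A × B be a finite bipartite graph with no isolated vertices in A or B. Then log μ_{A→B}(G) = min over input distributions P_X on A of max over channels W from A to B consistent with G of (H(Y) − H(X)), where Y is the output of channel W with input X ~ P_X. -/
open Real

variable {A B : Type*} [Fintype A] [Fintype B] [DecidableEq A] [DecidableEq B]

/-- The neighborhood of `S ⊆ A` in the bipartite graph `E ⊆ A × B`. -/
def nbhd (E : Finset (A × B)) (S : Finset A) : Finset B :=
  (E.filter (fun p => p.1 ∈ S)).image Prod.snd

/-- The magnification ratio `μ_{A→B}(E) = min_{∅ ≠ S ⊆ A} |N(S)|/|S|`. -/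
noncomputable def magRatio (E : Finset (A × B)) : ℝ :=
  sInf {r : ℝ | ∃ S : Finset A, S.Nonempty ∧ r = (nbhd E S).card / S.card}

/-- `p` is a probability distribution on `A`. -/
def IsDist (p : A → ℝ) : Prop := (∀ a, 0 ≤ p a) ∧ ∑ a, p a = 1

/-- `W` is a channel from `A` to `B` consistent with the bipartite graph `E`. -/
def IsChannel (E : Finset (A × B)) (W : A → B → ℝ) : Prop :=
  (∀ a b, 0 ≤ W a b) ∧ (∀ a, ∑ b, W a b = 1) ∧ ∀ a b, (a, b) ∉ E → W a b = 0

/-- Output distribution of channel `W` with input distribution `p`. -/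
def outDist (p : A → ℝ) (W : A → B → ℝ) (b : B) : ℝ := ∑ a, p a * W a b

/-- Shannon entropy (natural log) of a distribution on a finite type. -/
noncomputable def entDist {S : Type*} [Fintype S] (q : S → ℝ) : ℝ :=
  ∑ s : S, Real.negMulLog (q s)

/-!
Let `μ = k / m` be attained at `S₀`, with `k = |N(S₀)|` and `m = |S₀|`. Then `k |S| ≤ m |N(S)|` for
every `S`, so by Hall's theorem `k` copies of each input can be sent along edges with no output
receiving more than `m` copies; choosing a copy uniformly gives a channel that raises the entropy
of every input distribution by at least `log k - log m`. Conversely, the uniform distribution on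
`S₀` has entropy `log m` and every consistent channel maps it into `N(S₀)`, of entropy at most
`log k`.
-/

open Finset

section Entropy

lemma negMulLog_inv (x : ℝ) : negMulLog x⁻¹ = x⁻¹ * log x := by
  simp [negMulLog, Real.log_inv]

lemma mul_negMulLog_mul_inv {n : ℝ} (hn : n ≠ 0) (q : ℝ) :
    n * negMulLog (q * n⁻¹) = negMulLog q + q * log n := by
  rw [negMulLog_mul, negMulLog_inv]
  field_simp

lemma sum_negMulLog_le {ι : Type*} (F : Finset ι) {r : ι → ℝ} (hr : ∀ x ∈ F, 0 ≤ r x) {m : ℕ}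
    (hm : #F ≤ m) :
    ∑ x ∈ F, negMulLog (r x) ≤ negMulLog (∑ x ∈ F, r x) + (∑ x ∈ F, r x) * log m := by
  rcases F.eq_empty_or_nonempty with rfl | hF
  · simp
  have hn : (0 : ℝ) < #F := by exact_mod_cast hF.card_pos
  have hJensen := concaveOn_negMulLog.le_map_sum (t := F) (w := fun _ => (#F : ℝ)⁻¹) (p := r)
    (fun _ _ => by positivity) (by simp [hn.ne']) hr
  simp only [smul_eq_mul, ← mul_sum] at hJensen
  calc ∑ x ∈ F, negMulLog (r x)
      ≤ #F * negMulLog ((∑ x ∈ F, r x) * (#F : ℝ)⁻¹) := by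
        rw [mul_comm _ (#F : ℝ)⁻¹, ← inv_mul_le_iff₀ hn]
        exact hJensen
    _ = negMulLog (∑ x ∈ F, r x) + (∑ x ∈ F, r x) * log #F := mul_negMulLog_mul_inv hn.ne' _
    _ ≤ negMulLog (∑ x ∈ F, r x) + (∑ x ∈ F, r x) * log m := by
        gcongr
        exact sum_nonneg hr

lemma entDist_nonneg {α : Type*} [Fintype α] {p : α → ℝ} (hp : IsDist p) : 0 ≤ entDist p :=
  sum_nonneg fun a _ => negMulLog_nonneg (hp.1 a)
    (hp.2 ▸ single_le_sum (fun a _ => hp.1 a) (mem_univ a))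

lemma entDist_le_log_card {α : Type*} [Fintype α] {q : α → ℝ} (hq : IsDist q) (T : Finset α)
    (hsupp : ∀ a ∉ T, q a = 0) : entDist q ≤ log #T := by
  have hT : ∀ f : ℝ → ℝ, f 0 = 0 → ∑ a, f (q a) = ∑ a ∈ T, f (q a) := fun f hf =>
    (sum_subset (subset_univ T) fun a _ ha => by rw [hsupp a ha, hf]).symm
  have hsumT : ∑ a ∈ T, q a = 1 := (hT id rfl).symm.trans hq.2
  simpa [entDist, hT negMulLog negMulLog_zero, hsumT] using
    sum_negMulLog_le T (fun a _ => hq.1 a) le_rfl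

lemma sum_negMulLog_div_natCast {α : Type*} [Fintype α] {p : α → ℝ} (hp : ∑ a, p a = 1) {k : ℕ}
    (hk : 0 < k) : ∑ x : α × Fin k, negMulLog (p x.1 / k) = entDist p + log k := by
  have hk' : (k : ℝ) ≠ 0 := by positivity
  simp only [Fintype.sum_prod_type, sum_const, card_univ, Fintype.card_fin, nsmul_eq_mul,
    div_eq_mul_inv, mul_negMulLog_mul_inv hk']
  rw [sum_add_distrib, ← sum_mul, hp, one_mul, entDist]

end Entropy

section Graph

variable {α β : Type*} [DecidableEq α] [DecidableEq β] {E : Finset (α × β)}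

lemma mem_nbhd {S : Finset α} {b : β} : b ∈ nbhd E S ↔ ∃ a ∈ S, (a, b) ∈ E := by
  simp [nbhd, and_comm]

lemma magRatio_le (E : Finset (α × β)) {S : Finset α} (hS : S.Nonempty) :
    magRatio E ≤ #(nbhd E S) / #S :=
  csInf_le ⟨0, by rintro r ⟨T, -, rfl⟩; positivity⟩ ⟨S, hS, rfl⟩

lemma exists_magRatio_eq [Fintype α] [Nonempty α] (E : Finset (α × β)) :
    ∃ S : Finset α, S.Nonempty ∧ magRatio E = #(nbhd E S) / #S := by
  let R : Set ℝ := {r | ∃ S : Finset α, S.Nonempty ∧ r = #(nbhd E S) / #S}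
  have hne : R.Nonempty := ⟨_, univ, univ_nonempty, rfl⟩
  have hfin : R.Finite := (Set.finite_range fun S : Finset α => (#(nbhd E S) : ℝ) / #S).subset
    (by rintro r ⟨S, -, rfl⟩; exact ⟨S, rfl⟩)
  exact hne.csInf_mem hfin

lemma magRatio_of_isEmpty [IsEmpty α] (E : Finset (α × β)) : magRatio E = 0 := by
  have hS : ∀ S : Finset α, ¬ S.Nonempty := fun S ⟨a, _⟩ => isEmptyElim a
  simp [magRatio, hS]

lemma mul_card_le_of_magRatio_eq {k m : ℕ} (hm : 0 < m) (h : magRatio E = k / m)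
    (S : Finset α) : k * #S ≤ m * #(nbhd E S) := by
  rcases S.eq_empty_or_nonempty with rfl | hS
  · simp
  have hle := h ▸ magRatio_le E hS
  rw [div_le_div_iff₀ (by positivity) (by exact_mod_cast hS.card_pos)] at hle
  exact_mod_cast (by linarith : (k : ℝ) * #S ≤ m * #(nbhd E S))

/-- Hall's theorem for `k` copies of every `a ∈ α` against `m` copies of every `b ∈ β`. -/
lemma exists_map_card_fiber_le [Fintype α] {k m : ℕ}
    (hcard : ∀ S : Finset α, k * #S ≤ m * #(nbhd E S)) :
    ∃ g : α × Fin k → β, (∀ x, (x.1, g x) ∈ E) ∧ ∀ b, #{x | g x = b} ≤ m := by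
  let t : α × Fin k → Finset (β × Fin m) := fun x => nbhd E {x.1} ×ˢ univ
  have hall : ∀ s : Finset (α × Fin k), #s ≤ #(s.biUnion t) := by
    intro s
    have hunion : s.biUnion t = nbhd E (s.image Prod.fst) ×ˢ univ := by
      ext ⟨b, j⟩
      simp [t, mem_nbhd]
    calc #s ≤ #(s.image Prod.fst ×ˢ (univ : Finset (Fin k))) :=
          card_le_card fun x hx => mem_product.2 ⟨mem_image_of_mem _ hx, mem_univ _⟩
      _ = k * #(s.image Prod.fst) := by rw [card_product, card_univ, Fintype.card_fin, mul_comm]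
      _ ≤ m * #(nbhd E (s.image Prod.fst)) := hcard _
      _ = #(s.biUnion t) := by rw [hunion, card_product, card_univ, Fintype.card_fin, mul_comm]
  obtain ⟨f, hf, hft⟩ := (all_card_le_biUnion_card_iff_exists_injective t).1 hall
  refine ⟨fun x => (f x).1, fun x => ?_, fun b => ?_⟩
  · simpa [t, mem_nbhd] using (mem_product.1 (hft x)).1
  · calc #{x | (f x).1 = b} ≤ #(univ : Finset (Fin m)) :=
          card_le_card_of_injOn (fun x => (f x).2) (fun _ _ => mem_univ _)
            fun x hx y hy hxy =>
              hf (Prod.ext ((mem_filter.1 hx).2.trans (mem_filter.1 hy).2.symm) hxy)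
      _ = m := by rw [card_univ, Fintype.card_fin]

end Graph

section Channel

variable {α β : Type*}

lemma IsDist.nonempty [Fintype α] {p : α → ℝ} (hp : IsDist p) : Nonempty α := by
  by_contra h
  have := hp.2
  simp_all

lemma isDist_outDist [Fintype α] [Fintype β] {E : Finset (α × β)} {p : α → ℝ} {W : α → β → ℝ}
    (hp : IsDist p) (hW : IsChannel E W) : IsDist (outDist p W) := by
  refine ⟨fun b => sum_nonneg fun a _ => mul_nonneg (hp.1 a) (hW.1 a b), ?_⟩
  simp only [outDist]
  rw [sum_comm]
  simp [← mul_sum, hW.2.1, hp.2]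

noncomputable def spreadChannel [DecidableEq β] {k : ℕ} (g : α × Fin k → β) : α → β → ℝ :=
  fun a b => #{i | g (a, i) = b} / k

variable [DecidableEq β] {k : ℕ} {g : α × Fin k → β}

lemma isChannel_spreadChannel [Fintype β] {E : Finset (α × β)} (hk : 0 < k)
    (hg : ∀ x, (x.1, g x) ∈ E) : IsChannel E (spreadChannel g) := by
  refine ⟨fun a b => by unfold spreadChannel; positivity, fun a => ?_, fun a b hab => ?_⟩
  · have hcard := card_eq_sum_card_fiberwise (f := fun i => g (a, i)) (s := univ) (t := univ)
      fun _ _ => mem_univ _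
    rw [card_univ, Fintype.card_fin] at hcard
    simp only [spreadChannel, ← sum_div]
    rw [div_eq_one_iff_eq (by positivity)]
    exact_mod_cast hcard.symm
  · have : ∀ i, g (a, i) ≠ b := fun i hi => hab (hi ▸ hg (a, i))
    simp [spreadChannel, this]

lemma outDist_spreadChannel [Fintype α] (p : α → ℝ) (b : β) :
    outDist p (spreadChannel g) b = ∑ x with g x = b, p x.1 / k := by
  rw [sum_filter, Fintype.sum_prod_type]
  refine sum_congr rfl fun a _ => ?_
  simp only [← sum_filter, sum_const, nsmul_eq_mul, spreadChannel]
  ring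

/-- `entDist p + log k` is the entropy of the uniform lift of `p` to `α × Fin k`; the output is
its image under `g`, and merging at most `m` atoms into one lowers entropy by at most `log m`. -/
lemma entDist_add_log_le [Fintype α] [Fintype β] {E : Finset (α × β)} {m : ℕ} (hk : 0 < k)
    (hg : ∀ x, (x.1, g x) ∈ E) (hfib : ∀ b, #{x | g x = b} ≤ m) {p : α → ℝ} (hp : IsDist p) :
    entDist p + log k ≤ entDist (outDist p (spreadChannel g)) + log m := by
  have hq := isDist_outDist hp (isChannel_spreadChannel hk hg)
  calc entDist p + log k = ∑ x : α × Fin k, negMulLog (p x.1 / k) :=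
        (sum_negMulLog_div_natCast hp.2 hk).symm
    _ = ∑ b, ∑ x with g x = b, negMulLog (p x.1 / k) :=
        (sum_fiberwise_of_maps_to (fun x _ => mem_univ (g x)) _).symm
    _ ≤ ∑ b, (negMulLog (outDist p (spreadChannel g) b) + outDist p (spreadChannel g) b * log m) :=
        sum_le_sum fun b _ => by
          simpa only [outDist_spreadChannel] using
            sum_negMulLog_le _ (fun x _ => div_nonneg (hp.1 x.1) k.cast_nonneg) (hfib b)
    _ = entDist (outDist p (spreadChannel g)) + log m := by
        rw [sum_add_distrib, ← sum_mul, hq.2, one_mul, entDist]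

end Channel

section Uniform

variable {α β : Type*} [DecidableEq α]

noncomputable def uniformOn (S : Finset α) : α → ℝ := fun a => if a ∈ S then (#S : ℝ)⁻¹ else 0

lemma isDist_uniformOn [Fintype α] {S : Finset α} (hS : S.Nonempty) : IsDist (uniformOn S) := by
  refine ⟨fun a => by unfold uniformOn; split_ifs <;> positivity, ?_⟩
  simp [uniformOn, hS.card_pos.ne']

lemma entDist_uniformOn [Fintype α] (S : Finset α) : entDist (uniformOn S) = log #S := by
  have h : ∀ a, negMulLog (uniformOn S a) = if a ∈ S then negMulLog (#S : ℝ)⁻¹ else 0 := by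
    intro a; unfold uniformOn; split_ifs <;> simp
  rcases S.eq_empty_or_nonempty with rfl | hS
  · simp [entDist, h]
  simp only [entDist, h, sum_ite_mem, univ_inter, sum_const, nsmul_eq_mul, negMulLog_inv]
  field_simp [hS.card_pos.ne']

lemma entDist_outDist_uniformOn_le [Fintype α] [Fintype β] [DecidableEq β] {E : Finset (α × β)}
    {S : Finset α} (hS : S.Nonempty) {W : α → β → ℝ} (hW : IsChannel E W) :
    entDist (outDist (uniformOn S) W) ≤ log #(nbhd E S) := by
  refine entDist_le_log_card (isDist_outDist (isDist_uniformOn hS) hW) _ fun b hb => ?_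
  refine sum_eq_zero fun a _ => ?_
  by_cases ha : a ∈ S
  · rw [hW.2.2 a b fun hab => hb (mem_nbhd.2 ⟨a, ha, hab⟩), mul_zero]
  · simp [uniformOn, ha]

end Uniform

lemma sInf_setOf_sSup_eq {ι : Type*} {P : ι → Prop} {f : ι → Set ℝ} {v : ℝ}
    (hbdd : ∀ i, P i → BddAbove (f i)) (hge : ∀ i, P i → ∃ s ∈ f i, v ≤ s) {i₀ : ι} (hi₀ : P i₀)
    (hne : (f i₀).Nonempty) (hle : ∀ s ∈ f i₀, s ≤ v) :
    sInf {r | ∃ i, P i ∧ r = sSup (f i)} = v := by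
  have hlow : ∀ r ∈ {r | ∃ i, P i ∧ r = sSup (f i)}, v ≤ r := by
    rintro r ⟨i, hi, rfl⟩
    obtain ⟨s, hs, hvs⟩ := hge i hi
    exact hvs.trans (le_csSup (hbdd i hi) hs)
  exact le_antisymm ((csInf_le ⟨v, hlow⟩ ⟨i₀, hi₀, rfl⟩).trans (csSup_le hne hle))
    (le_csInf ⟨_, i₀, hi₀, rfl⟩ hlow)

theorem stmt15_general (E : Finset (A × B))
    (hA : ∀ a : A, ∃ b : B, (a, b) ∈ E) :
    Real.log (magRatio E) =
      sInf {r : ℝ | ∃ p : A → ℝ, IsDist p ∧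
        r = sSup {s : ℝ | ∃ W : A → B → ℝ, IsChannel E W ∧
              s = entDist (outDist p W) - entDist p}} := by
  rcases isEmpty_or_nonempty A with hA₀ | hA₀
  · have hp : ∀ p : A → ℝ, ¬ IsDist p := fun p hp => hp.nonempty.elim isEmptyElim
    simp [magRatio_of_isEmpty, hp]
  obtain ⟨S₀, hS₀, hμ⟩ := exists_magRatio_eq E
  have hm : 0 < #S₀ := hS₀.card_pos
  have hk : 0 < #(nbhd E S₀) := by
    obtain ⟨a, ha⟩ := hS₀
    obtain ⟨b, hb⟩ := hA a
    exact card_pos.2 ⟨b, mem_nbhd.2 ⟨a, ha, hb⟩⟩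
  obtain ⟨g, hgE, hfib⟩ := exists_map_card_fiber_le (mul_card_le_of_magRatio_eq hm hμ)
  rw [hμ, log_div (by positivity) (by positivity)]
  refine (sInf_setOf_sSup_eq (fun p hp => ⟨log #(univ : Finset B), ?_⟩) (fun p hp => ?_)
    (isDist_uniformOn hS₀) ?_ ?_).symm
  · rintro s ⟨W, hW, rfl⟩
    have := entDist_le_log_card (isDist_outDist hp hW) univ (by simp)
    linarith [entDist_nonneg hp]
  · refine ⟨_, ⟨_, isChannel_spreadChannel hk hgE, rfl⟩, ?_⟩
    linarith [entDist_add_log_le hk hgE hfib hp]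
  · exact ⟨_, _, isChannel_spreadChannel hk hgE, rfl⟩
  · rintro s ⟨W, hW, rfl⟩
    linarith [entDist_outDist_uniformOn_le hS₀ hW, entDist_uniformOn (α := A) S₀]

/-- Entropic characterization of the magnification ratio:
`log μ_{A→B}(E) = min_{P_X} max_{W ∈ W(E)} (H(Y) - H(X))`. -/
theorem stmt15 (E : Finset (A × B))
    (hA : ∀ a : A, ∃ b : B, (a, b) ∈ E) (hB : ∀ b : B, ∃ a : A, (a, b) ∈ E) :
    Real.log (magRatio E) =
      sInf {r : ℝ | ∃ p : A → ℝ, IsDist p ∧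
        r = sSup {s : ℝ | ∃ W : A → B → ℝ, IsChannel E W ∧
              s = entDist (outDist p W) - entDist p}} :=
  stmt15_general E hA
end
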